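/- arXiv:1412.5907 — 8 statements merged into one kernel-verified Lean document; each statement's English description precedes it below -/
import Mathlib

section
/- Let A be a dialgebra over a commutative ring K. Then the bracket defined by [a,b] := a⊢b − b⊣a satisfies the left Leibniz identity [a,[b,c]] = [[a,b],c] + [b,[a,c]] for all a,b,c ∈ A; in other words, (A,[·,·]) is a Leibniz algebra over K. -/
/-- Let `A` be a dialgebra over a commutative ring `K` (containing the
rationals), i.e. a `K`-module with two bilinear associative multiplications `⊢` (`vd`) and
`⊣` (`dv`) satisfying the three dialgebra axioms.  Then the bracket
`[a,b] := a ⊢ b - b ⊣ a` satisfies the left Leibniz identity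
`[a,[b,c]] = [[a,b],c] + [b,[a,c]]`, i.e. `(A, [·,·])` is a Leibniz algebra over `K`. -/
theorem dialgebra_bracket_is_leibniz
    (K A : Type*) [CommRing K] [Algebra ℚ K] [AddCommGroup A] [Module K A]
    (vd dv : A →ₗ[K] A →ₗ[K] A)
    (vd_assoc : ∀ a b c : A, vd (vd a b) c = vd a (vd b c))
    (dv_assoc : ∀ a b c : A, dv (dv a b) c = dv a (dv b c))
    (ax1 : ∀ a b c : A, vd (vd a b) c = vd (dv a b) c)
    (ax2 : ∀ a b c : A, dv a (dv b c) = dv a (vd b c))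
    (ax3 : ∀ a b c : A, dv (vd a b) c = vd a (dv b c))
    (br : A → A → A) (hbr : ∀ a b : A, br a b = vd a b - dv b a) :
    ∀ a b c : A, br a (br b c) = br (br a b) c + br b (br a c) := by
  intro a b c
  simp only [hbr, map_sub, LinearMap.sub_apply]
  rw [ax3 b c a, ax3 a c b, ← ax1 b a c, vd_assoc b a c, dv_assoc c a b, ax2 c a b, dv_assoc c b a, ← vd_assoc a b c]
  abel
end

section
/- Let H be a cocommutative Hopf algebra over a commutative ring K containing the rationals, and define h▹h' := ad_h(h') = Σ h⁽¹⁾h'S(h⁽²⁾). Then (H,Δ,ε,1,▹) is a rack bialgebra: the map h⊗h' ↦ h▹h' is a morphism of C³-coalgebras H⊗H → H, and for all h,h',h'' ∈ H one has 1▹h = h, h▹1 = ε(h)1, and h▹(h'▹h'') = Σ (h⁽¹⁾▹h')▹(h⁽²⁾▹h''). -/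
/-! Cocommutativity makes `Δ : H → H ⊗ H` a bialgebra map, and a bialgebra map between Hopf
algebras commutes with the antipodes (both composites are convolution inverses of the map).
Hence `Δ` carries `ad_h x` to the adjoint action of `Δ h` on `Δ x` in `H ⊗ H`, which is the
tensor square of `ad`: this is compatibility with `Δ`. Self-distributivity holds because `ad` is
an action, `ad_{ab} = ad_a ∘ ad_b`, and `Σ (a⁽¹⁾ ▹ b) a⁽²⁾ = a b`, so both sides equal
`ad_{ab} c`. -/

open TensorProduct

namespace RackPaper

variable (K : Type*) [CommRing K]
variable (B : Type*) [AddCommGroup B] [Module K B]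

/-- The comultiplication of the tensor-product coalgebra `B ⊗ B`, built from a
comultiplication on `B`:  `a ⊗ b ↦ Σ (a⁽¹⁾ ⊗ b⁽¹⁾) ⊗ (a⁽²⁾ ⊗ b⁽²⁾)`. -/
noncomputable def comul2 (comul : B →ₗ[K] B ⊗[K] B) :
    B ⊗[K] B →ₗ[K] (B ⊗[K] B) ⊗[K] (B ⊗[K] B) :=
  (tensorTensorTensorComm K B B B B).toLinearMap ∘ₗ TensorProduct.map comul comul

/-- The counit of the tensor-product coalgebra `B ⊗ B`. -/
noncomputable def counit2 (counit : B →ₗ[K] K) : B ⊗[K] B →ₗ[K] K :=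
  (LinearMap.mul' K K) ∘ₗ TensorProduct.map counit counit

/-- `(B, comul, counit, one)` is a coassociative counital coaugmented coalgebra
(a C³-coalgebra). -/
structure IsC3Coalgebra (comul : B →ₗ[K] B ⊗[K] B) (counit : B →ₗ[K] K) (one : B) : Prop where
  coassoc : (TensorProduct.assoc K B B B).toLinearMap ∘ₗ
      (TensorProduct.map comul LinearMap.id) ∘ₗ comul
      = (TensorProduct.map LinearMap.id comul) ∘ₗ comul
  counit_comul : (TensorProduct.lid K B).toLinearMap ∘ₗ
      (TensorProduct.map counit LinearMap.id) ∘ₗ comul = LinearMap.id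
  comul_counit : (TensorProduct.rid K B).toLinearMap ∘ₗ
      (TensorProduct.map LinearMap.id counit) ∘ₗ comul = LinearMap.id
  comul_one : comul one = one ⊗ₜ[K] one
  counit_one : counit one = 1

/-- A rack bialgebra structure on the C³-coalgebra `(B, comul, counit, one)`:
the multiplication `μ` (written `a ▹ b`) is a morphism of C³-coalgebras,
`1 ▹ a = a`, `a ▹ 1 = ε(a) 1`, and the self-distributivity identity
`a ▹ (b ▹ c) = Σ (a⁽¹⁾ ▹ b) ▹ (a⁽²⁾ ▹ c)` holds. -/
structure IsRackBialgebra (comul : B →ₗ[K] B ⊗[K] B) (counit : B →ₗ[K] K) (one : B)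
    (mul : B ⊗[K] B →ₗ[K] B) : Prop where
  isC3 : IsC3Coalgebra K B comul counit one
  comul_mul : comul ∘ₗ mul = (TensorProduct.map mul mul) ∘ₗ comul2 K B comul
  counit_mul : counit ∘ₗ mul = counit2 K B counit
  one_mul : ∀ a : B, mul (one ⊗ₜ[K] a) = a
  mul_one : ∀ a : B, mul (a ⊗ₜ[K] one) = counit a • one
  self_distrib : mul ∘ₗ TensorProduct.map LinearMap.id mul
      = mul ∘ₗ TensorProduct.map mul mul ∘ₗ
          (tensorTensorTensorComm K B B B B).toLinearMap ∘ₗ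
          TensorProduct.map comul LinearMap.id

/-- The adjoint representation of a Hopf algebra, as a linear map on the tensor square:
`h ⊗ h' ↦ ad_h(h') = Σ h⁽¹⁾ h' S(h⁽²⁾)`. -/
noncomputable def adjointMap (H : Type*) [Ring H] [HopfAlgebra K H] :
    H ⊗[K] H →ₗ[K] H :=
  (LinearMap.mul' K H) ∘ₗ
  (TensorProduct.map LinearMap.id (LinearMap.mul' K H)) ∘ₗ
  (TensorProduct.map LinearMap.id
      (TensorProduct.map LinearMap.id (HopfAlgebra.antipode (R := K)))) ∘ₗ
  (TensorProduct.map LinearMap.id (TensorProduct.comm K H H).toLinearMap) ∘ₗ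
  (TensorProduct.assoc K H H H).toLinearMap ∘ₗ
  (TensorProduct.map (Coalgebra.comul) LinearMap.id)

open Coalgebra HopfAlgebra

open WithConv in
theorem _root_.BialgHom.comp_antipode {R A C : Type*} [CommSemiring R] [Semiring A]
    [HopfAlgebra R A] [Semiring C] [HopfAlgebra R C] (f : A →ₐc[R] C) :
    (f : A →ₗ[R] C) ∘ₗ antipode R = antipode R ∘ₗ (f : A →ₗ[R] C) := by
  apply toConv_injective
  refine left_inv_eq_right_inv (a := toConv (f : A →ₗ[R] C)) ?_ ?_
  · calc toConv ((f : A →ₗ[R] C) ∘ₗ antipode R) * toConv (f : A →ₗ[R] C)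
        = toConv ((f : A →ₐ[R] C).toLinearMap ∘ₗ
            ofConv (toConv (antipode R) * toConv (LinearMap.id : A →ₗ[R] A))) := by
          rw [LinearMap.algHom_comp_convMul_distrib]; rfl
      _ = 1 := by
          rw [LinearMap.antipode_mul_id]; ext a; simpa using AlgHomClass.commutes f (counit a)
  · calc toConv (f : A →ₗ[R] C) * toConv (antipode R ∘ₗ (f : A →ₗ[R] C))
        = toConv (ofConv (toConv (LinearMap.id : C →ₗ[R] C) * toConv (antipode R)) ∘ₗ
            (f : A →ₗc[R] C).toLinearMap) := by
          rw [LinearMap.convMul_comp_coalgHom_distrib]; rfl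
      _ = 1 := by
          rw [LinearMap.id_mul_antipode]; ext a; simp

theorem _root_.BialgHom.map_antipode {R A C : Type*} [CommSemiring R] [Semiring A]
    [HopfAlgebra R A] [Semiring C] [HopfAlgebra R C] (f : A →ₐc[R] C) (a : A) :
    f (antipode R a) = antipode R (f a) :=
  LinearMap.congr_fun f.comp_antipode a

theorem isC3Coalgebra (R A : Type*) [CommRing R] [Ring A] [Bialgebra R A] :
    IsC3Coalgebra R A comul counit 1 where
  coassoc := coassoc
  counit_comul := LinearMap.ext fun a ↦
    (congrArg (TensorProduct.lid R A) (rTensor_counit_comul (R := R) a)).trans (by simp)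
  comul_counit := LinearMap.ext fun a ↦
    (congrArg (TensorProduct.rid R A) (lTensor_counit_comul (R := R) a)).trans (by simp)
  comul_one := by rw [Bialgebra.comul_one, Algebra.TensorProduct.one_def]
  counit_one := Bialgebra.counit_one

section Adjoint
variable {R A : Type*} [CommRing R] [Ring A] [HopfAlgebra R A]

theorem adjointMap_tmul {ι : Type*} {a : A} (𝓡 : Repr R a ι) (x : A) :
    adjointMap R A (a ⊗ₜ x) = ∑ i ∈ 𝓡.index, 𝓡.left i * x * antipode R (𝓡.right i) := by
  simp [adjointMap, ← 𝓡.eq, sum_tmul, mul_assoc]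

theorem adjointMap_one_tmul (x : A) : adjointMap R A (1 ⊗ₜ x) = x := by
  simp [adjointMap, Bialgebra.comul_one, Algebra.TensorProduct.one_def]

theorem adjointMap_tmul_one (a : A) : adjointMap R A (a ⊗ₜ 1) = counit (R := R) a • 1 := by
  simpa [adjointMap_tmul (ℛ R a)] using sum_mul_antipode_eq_smul (ℛ R a)

theorem counit_adjointMap (a x : A) :
    counit (R := R) (adjointMap R A (a ⊗ₜ x)) = counit a * counit x := by
  calc counit (R := R) (adjointMap R A (a ⊗ₜ x))
      = counit (∑ i ∈ (ℛ R a).index, (ℛ R a).left i * antipode R ((ℛ R a).right i)) *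
          counit x := by
        simp only [adjointMap_tmul (ℛ R a), map_sum, Finset.sum_mul, Bialgebra.counit_mul,
          mul_right_comm]
    _ = counit a * counit x := by simp [sum_mul_antipode_eq_smul]

theorem adjointMap_mul_tmul (a b x : A) :
    adjointMap R A ((a * b) ⊗ₜ x) = adjointMap R A (a ⊗ₜ adjointMap R A (b ⊗ₜ x)) := by
  rw [adjointMap_tmul ((ℛ R a).mul (ℛ R b)), adjointMap_tmul (ℛ R a), adjointMap_tmul (ℛ R b)]
  simp [Finset.sum_product, Finset.mul_sum, Finset.sum_mul, antipode_mul_antidistrib, mul_assoc]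

theorem sum_adjointMap_mul {ι : Type*} {a : A} (𝓡 : Repr R a ι) (b : A) :
    ∑ i ∈ 𝓡.index, adjointMap R A (𝓡.left i ⊗ₜ b) * 𝓡.right i = a * b := by
  -- Coassociativity turns `Σ a⁽¹⁾⁽¹⁾ b S(a⁽¹⁾⁽²⁾) a⁽²⁾` into `Σ a⁽¹⁾ b S(a⁽²⁾⁽¹⁾) a⁽²⁾⁽²⁾`.
  let T : A ⊗[R] (A ⊗[R] A) →ₗ[R] A := LinearMap.mul' R A ∘ₗ
    map (LinearMap.mulRight R b) (LinearMap.mul' R A ∘ₗ map (antipode R) LinearMap.id)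
  have h := congrArg T (sum_tmul_tmul_eq 𝓡 (fun i ↦ ℛ R (𝓡.left i)) (fun i ↦ ℛ R (𝓡.right i)))
  simp only [T, map_sum, LinearMap.comp_apply, map_tmul, LinearMap.mul'_apply,
    LinearMap.mulRight_apply, LinearMap.id_apply] at h
  calc ∑ i ∈ 𝓡.index, adjointMap R A (𝓡.left i ⊗ₜ b) * 𝓡.right i
      = ∑ i ∈ 𝓡.index, 𝓡.left i * b *
          ∑ j ∈ (ℛ R (𝓡.right i)).index,
            antipode R ((ℛ R (𝓡.right i)).left j) * (ℛ R (𝓡.right i)).right j := by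
        simp only [adjointMap_tmul (ℛ R _), Finset.sum_mul, Finset.mul_sum, mul_assoc] at h ⊢
        exact h
    _ = ∑ i ∈ 𝓡.index, counit (R := R) (𝓡.right i) • (𝓡.left i * b) := by
        simp [sum_antipode_mul_eq_smul]
    _ = a * b := by
        simpa using congrArg (TensorProduct.rid R A)
          (sum_map_tmul_counit_eq (LinearMap.mulRight R b) a (repr := 𝓡))

theorem map_adjointMap {C : Type*} [Ring C] [HopfAlgebra R C] (f : A →ₐc[R] C) (a x : A) :
    f (adjointMap R A (a ⊗ₜ x)) = adjointMap R C (f a ⊗ₜ f x) := by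
  simp [adjointMap_tmul (ℛ R a), adjointMap_tmul ((ℛ R a).induced f), f.map_antipode]

theorem adjointMap_tensorProduct {C : Type*} [Ring C] [HopfAlgebra R C] :
    adjointMap R (A ⊗[R] C) = map (adjointMap R A) (adjointMap R C) ∘ₗ
      (tensorTensorTensorComm R A C A C).toLinearMap := by
  ext a c x y
  simp [adjointMap_tmul ((ℛ R a).tmul (ℛ R c)), adjointMap_tmul (ℛ R a), adjointMap_tmul (ℛ R c),
    Finset.sum_product, sum_tmul, tmul_sum]
  exact Finset.sum_comm

theorem comul_comp_adjointMap [IsCocomm R A] :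
    comul ∘ₗ adjointMap R A = map (adjointMap R A) (adjointMap R A) ∘ₗ comul2 R A comul := by
  refine TensorProduct.ext' fun a x ↦ ?_
  calc comul (adjointMap R A (a ⊗ₜ x)) = adjointMap R (A ⊗[R] A) (comul a ⊗ₜ comul x) :=
        map_adjointMap (Bialgebra.comulBialgHom R A) a x
    _ = _ := by rw [adjointMap_tensorProduct]; rfl

theorem counit_comp_adjointMap : counit ∘ₗ adjointMap R A = counit2 R A counit :=
  TensorProduct.ext' fun a x ↦ by simp [counit2, counit_adjointMap]

theorem adjointMap_self_distrib :
    adjointMap R A ∘ₗ map LinearMap.id (adjointMap R A) =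
      adjointMap R A ∘ₗ map (adjointMap R A) (adjointMap R A) ∘ₗ
        (tensorTensorTensorComm R A A A A).toLinearMap ∘ₗ map comul LinearMap.id := by
  refine TensorProduct.ext_threefold' fun a b c ↦ ?_
  calc adjointMap R A (a ⊗ₜ adjointMap R A (b ⊗ₜ c))
      = adjointMap R A ((∑ i ∈ (ℛ R a).index,
          adjointMap R A ((ℛ R a).left i ⊗ₜ b) * (ℛ R a).right i) ⊗ₜ c) := by
        rw [sum_adjointMap_mul, adjointMap_mul_tmul]
    _ = _ := by
        simp [← (ℛ R a).eq, sum_tmul, adjointMap_mul_tmul]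

end Adjoint

theorem hopf_adjoint_is_rack_bialgebra_general
    (K : Type*) [CommRing K]
    (H : Type*) [Ring H] [HopfAlgebra K H]
    (cocomm : ∀ h : H,
      (TensorProduct.comm K H H) (Coalgebra.comul h) = Coalgebra.comul (R := K) h) :
    IsRackBialgebra K H (Coalgebra.comul) (Coalgebra.counit) (1 : H) (adjointMap K H) :=
  have : IsCocomm K H := ⟨LinearMap.ext cocomm⟩
  { isC3 := isC3Coalgebra K H
    comul_mul := comul_comp_adjointMap
    counit_mul := counit_comp_adjointMap
    one_mul := adjointMap_one_tmul
    mul_one := adjointMap_tmul_one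
    self_distrib := adjointMap_self_distrib }

/-- Let `H` be a cocommutative Hopf algebra over a commutative ring `K`
containing the rationals, and define `h ▹ h' := ad_h(h') = Σ h⁽¹⁾ h' S(h⁽²⁾)`.  Then
`(H, Δ, ε, 1, ▹)` is a rack bialgebra: `▹` is a morphism of C³-coalgebras `H ⊗ H → H`, and
for all `h, h', h'' ∈ H` one has `1 ▹ h = h`, `h ▹ 1 = ε(h) 1`, and
`h ▹ (h' ▹ h'') = Σ (h⁽¹⁾ ▹ h') ▹ (h⁽²⁾ ▹ h'')`. -/
theorem hopf_adjoint_is_rack_bialgebra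
    (K : Type*) [CommRing K] [Algebra ℚ K]
    (H : Type*) [Ring H] [HopfAlgebra K H]
    (cocomm : ∀ h : H,
      (TensorProduct.comm K H H) (Coalgebra.comul h) = Coalgebra.comul (R := K) h) :
    IsRackBialgebra K H (Coalgebra.comul) (Coalgebra.counit) (1 : H) (adjointMap K H) :=
  hopf_adjoint_is_rack_bialgebra_general K H cocomm

end RackPaper
end

section
/- Let (B,Φ,H,ℓ) be an augmented rack bialgebra over K. Then B with the multiplication a▹b := Φ(a).b is a rack bialgebra; it is left-regular, namely the map μ'(a⊗b) := S(Φ(a)).b satisfies Σ a⁽¹⁾▹(μ'(a⁽²⁾⊗b)) = ε(a)b = Σ μ'(a⁽¹⁾⊗(a⁽²⁾▹b)) for all a,b ∈ B; and Φ is multiplicative for the rack products: Φ(a▹b) = ad_{Φ(a)}(Φ(b)) for all a,b ∈ B. -/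
/-!
Since `ℓ` is an action and `Φ` is equivariant, `(a⁽¹⁾ ▹ b) ▹ (a⁽²⁾ ▹ c)` is the action of
`Σ ad_{Φ(a)⁽¹⁾}(Φ b) Φ(a)⁽²⁾` on `c`, and in any Hopf algebra `Σ ad_{h⁽¹⁾}(k) h⁽²⁾ = h k` by
coassociativity and the antipode axiom; this gives self-distributivity. The product `▹` is the
composite of the coalgebra maps `Φ ⊗ id` and `ℓ`, and left regularity is the antipode axiom
`Σ Φ(a)⁽¹⁾ S(Φ(a)⁽²⁾) = ε(a)` read through the action.
-/

open TensorProduct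

namespace RackPaper

variable (K : Type*) [CommRing K]
variable (B : Type*) [AddCommGroup B] [Module K B]

section HopfAlgebra

open Coalgebra HopfAlgebra

variable {R H : Type*} [CommRing R] [Ring H] [HopfAlgebra R H]

lemma adjointMap_tmul_of_repr {h : H} {ι : Type*} (𝓡 : Repr R h ι) (k : H) :
    adjointMap R H (h ⊗ₜ k) = ∑ i ∈ 𝓡.index, 𝓡.left i * (k * antipode R (𝓡.right i)) := by
  simp [adjointMap, ← 𝓡.eq, sum_tmul]

lemma sum_adjointMap_mul_of_repr {h : H} {ι : Type*} (𝓡 : Repr R h ι) (k : H) :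
    ∑ i ∈ 𝓡.index, adjointMap R H (𝓡.left i ⊗ₜ k) * 𝓡.right i = h * k := by
  let 𝓡₁ i := Repr.arbitrary R (𝓡.left i)
  let 𝓡₂ i := Repr.arbitrary R (𝓡.right i)
  let T : H ⊗[R] (H ⊗[R] H) →ₗ[R] H :=
    LinearMap.mul' R H ∘ₗ LinearMap.lTensor H
      (LinearMap.mul' R H ∘ₗ LinearMap.rTensor H (LinearMap.mulLeft R k ∘ₗ antipode R))
  -- coassociativity: `Σ h⁽¹⁾⁽¹⁾ k S(h⁽¹⁾⁽²⁾) h⁽²⁾ = Σ h⁽¹⁾ k S(h⁽²⁾⁽¹⁾) h⁽²⁾⁽²⁾`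
  have hcoassoc := congrArg T (sum_tmul_tmul_eq 𝓡 𝓡₁ 𝓡₂)
  simp only [T, map_sum, LinearMap.comp_apply, LinearMap.lTensor_tmul, LinearMap.rTensor_tmul,
    LinearMap.mul'_apply, LinearMap.mulLeft_apply] at hcoassoc
  calc ∑ i ∈ 𝓡.index, adjointMap R H (𝓡.left i ⊗ₜ k) * 𝓡.right i
      = ∑ i ∈ 𝓡.index, ∑ j ∈ (𝓡₁ i).index,
          (𝓡₁ i).left j * (k * antipode R ((𝓡₁ i).right j) * 𝓡.right i) := by
        simp only [adjointMap_tmul_of_repr (𝓡₁ _), Finset.sum_mul, mul_assoc]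
    _ = ∑ i ∈ 𝓡.index, 𝓡.left i * (k * ∑ j ∈ (𝓡₂ i).index,
          antipode R ((𝓡₂ i).left j) * (𝓡₂ i).right j) := by
        rw [hcoassoc]
        simp only [Finset.mul_sum, mul_assoc]
    _ = ∑ i ∈ 𝓡.index, counit (R := R) (𝓡.right i) • 𝓡.left i * k := by
        simp only [sum_antipode_mul_eq_smul, mul_smul_comm, mul_one, smul_mul_assoc]
    _ = h * k := by
        have hcounit := congrArg (TensorProduct.rid R H) (sum_tmul_counit_eq 𝓡)
        simp only [map_sum, rid_tmul, one_smul] at hcounit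
        rw [← Finset.sum_mul, hcounit]

end HopfAlgebra

section RackProduct

variable {K B} {A H : Type*} [AddCommGroup A] [Module K A]

/-- `a ▹ b = Φ(a).b`; with `antipode K ∘ₗ Φ` in place of `Φ` this is the map `μ'`. -/
noncomputable def rackMul [AddCommGroup H] [Module K H] (Φ : A →ₗ[K] H)
    (ℓ : H ⊗[K] B →ₗ[K] B) : A ⊗[K] B →ₗ[K] B :=
  ℓ ∘ₗ map Φ LinearMap.id

section Module

variable [AddCommGroup H] [Module K H] {ℓ : H ⊗[K] B →ₗ[K] B}

@[simp]
lemma rackMul_tmul (Φ : A →ₗ[K] H) (a : A) (b : B) : rackMul Φ ℓ (a ⊗ₜ b) = ℓ (Φ a ⊗ₜ b) :=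
  rfl

lemma rackMul_comp_rTensor {A' : Type*} [AddCommGroup A'] [Module K A'] (Φ : A →ₗ[K] H)
    (f : A' →ₗ[K] A) : rackMul Φ ℓ ∘ₗ map f LinearMap.id = rackMul (Φ ∘ₗ f) ℓ := by
  ext; rfl

end Module

variable [Ring H] [Algebra K H] {ℓ : H ⊗[K] B →ₗ[K] B}

lemma rackMul_comp_lTensor_rackMul
    (hℓ_mul : ∀ (h h' : H) (b : B), ℓ ((h * h') ⊗ₜ[K] b) = ℓ (h ⊗ₜ[K] ℓ (h' ⊗ₜ[K] b)))
    {A' : Type*} [AddCommGroup A'] [Module K A'] (Φ : A →ₗ[K] H) (Ψ : A' →ₗ[K] H) :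
    rackMul Φ ℓ ∘ₗ map LinearMap.id (rackMul Ψ ℓ) ∘ₗ (TensorProduct.assoc K A A' B).toLinearMap
      = rackMul (LinearMap.mul' K H ∘ₗ map Φ Ψ) ℓ := by
  ext; simp [hℓ_mul]

lemma rackMul_algebraMap_comp (hℓ_one : ∀ b : B, ℓ ((1 : H) ⊗ₜ[K] b) = b) (f : A →ₗ[K] K) :
    rackMul (Algebra.linearMap K H ∘ₗ f) ℓ
      = (TensorProduct.lid K B).toLinearMap ∘ₗ map f LinearMap.id := by
  ext a b
  simp [Algebra.algebraMap_eq_smul_one, ← smul_tmul', hℓ_one]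

end RackProduct

section AugmentedRackBialgebra

open Coalgebra HopfAlgebra

variable {K B} {H : Type*} [Ring H] [HopfAlgebra K H] {comulB : B →ₗ[K] B ⊗[K] B}
  {counitB : B →ₗ[K] K} {Φ : B →ₗ[K] H} {ℓ : H ⊗[K] B →ₗ[K] B}

noncomputable def reprOfMap (hΦ_comul : comul ∘ₗ Φ = map Φ Φ ∘ₗ comulB) {a : B}
    {S : Finset (B × B)} (hS : comulB a = ∑ i ∈ S, i.1 ⊗ₜ i.2) : Repr K (Φ a) (B × B) where
  index := S
  left i := Φ i.1
  right i := Φ i.2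
  eq := by simp [← LinearMap.comp_apply comul Φ, hΦ_comul, hS]

lemma mul'_map_self_antipode_comp_comul (hΦ_comul : comul ∘ₗ Φ = map Φ Φ ∘ₗ comulB)
    (hΦ_counit : counit ∘ₗ Φ = counitB) :
    LinearMap.mul' K H ∘ₗ map Φ (antipode K ∘ₗ Φ) ∘ₗ comulB
      = Algebra.linearMap K H ∘ₗ counitB := by
  ext a
  have hcomul : comul (Φ a) = map Φ Φ (comulB a) := LinearMap.congr_fun hΦ_comul a
  have hcounit : counit (Φ a) = counitB a := LinearMap.congr_fun hΦ_counit a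
  simp only [LinearMap.comp_apply, Algebra.linearMap_apply]
  rw [← hcounit, ← mul_antipode_lTensor_comul_apply, hcomul, LinearMap.lTensor, map_map]
  rfl

lemma mul'_map_antipode_comp_self_comul (hΦ_comul : comul ∘ₗ Φ = map Φ Φ ∘ₗ comulB)
    (hΦ_counit : counit ∘ₗ Φ = counitB) :
    LinearMap.mul' K H ∘ₗ map (antipode K ∘ₗ Φ) Φ ∘ₗ comulB
      = Algebra.linearMap K H ∘ₗ counitB := by
  ext a
  have hcomul : comul (Φ a) = map Φ Φ (comulB a) := LinearMap.congr_fun hΦ_comul a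
  have hcounit : counit (Φ a) = counitB a := LinearMap.congr_fun hΦ_counit a
  simp only [LinearMap.comp_apply, Algebra.linearMap_apply]
  rw [← hcounit, ← mul_antipode_rTensor_comul_apply, hcomul, LinearMap.rTensor, map_map]
  rfl

lemma comul_comp_rackMul (hΦ_comul : comul ∘ₗ Φ = map Φ Φ ∘ₗ comulB)
    (hℓ_comul : comulB ∘ₗ ℓ = map ℓ ℓ ∘ₗ (tensorTensorTensorComm K H H B B).toLinearMap ∘ₗ
        map comul comulB) :
    comulB ∘ₗ rackMul Φ ℓ = map (rackMul Φ ℓ) (rackMul Φ ℓ) ∘ₗ comul2 K B comulB := by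
  calc comulB ∘ₗ rackMul Φ ℓ
      = map ℓ ℓ ∘ₗ (tensorTensorTensorComm K H H B B).toLinearMap ∘ₗ
          map (map Φ Φ) (map LinearMap.id LinearMap.id) ∘ₗ map comulB comulB := by
        rw [rackMul, ← LinearMap.comp_assoc, hℓ_comul, LinearMap.comp_assoc, LinearMap.comp_assoc,
          ← map_comp, hΦ_comul, ← map_comp, map_id, LinearMap.id_comp, LinearMap.comp_id]
    _ = map (rackMul Φ ℓ) (rackMul Φ ℓ) ∘ₗ comul2 K B comulB := by
        rw [comul2, ← LinearMap.comp_assoc _ (map (map Φ Φ) _), tensorTensorTensorComm_comp_map,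
          LinearMap.comp_assoc, ← LinearMap.comp_assoc _ _ (map ℓ ℓ), ← map_comp]
        rfl

lemma counit_comp_rackMul (hΦ_counit : counit ∘ₗ Φ = counitB)
    (hℓ_counit : counitB ∘ₗ ℓ = LinearMap.mul' K K ∘ₗ map counit counitB) :
    counitB ∘ₗ rackMul Φ ℓ = counit2 K B counitB := by
  rw [rackMul, ← LinearMap.comp_assoc, hℓ_counit, LinearMap.comp_assoc, ← map_comp, hΦ_counit,
    LinearMap.comp_id, counit2]

lemma rackMul_one_tmul {oneB : B} (hΦ_one : Φ oneB = 1)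
    (hℓ_one : ∀ b : B, ℓ ((1 : H) ⊗ₜ[K] b) = b) (a : B) : rackMul Φ ℓ (oneB ⊗ₜ a) = a := by
  rw [rackMul_tmul, hΦ_one, hℓ_one]

lemma rackMul_tmul_one {oneB : B} (hΦ_counit : counit ∘ₗ Φ = counitB)
    (hℓ_oneB : ∀ h : H, ℓ (h ⊗ₜ[K] oneB) = counit (R := K) h • oneB) (a : B) :
    rackMul Φ ℓ (a ⊗ₜ oneB) = counitB a • oneB := by
  rw [rackMul_tmul, hℓ_oneB, ← hΦ_counit, LinearMap.comp_apply]

lemma comp_rackMul_eq_adjointMap (hΦ_equiv : Φ ∘ₗ ℓ = adjointMap K H ∘ₗ map LinearMap.id Φ) :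
    Φ ∘ₗ rackMul Φ ℓ = adjointMap K H ∘ₗ map Φ Φ := by
  rw [rackMul, ← LinearMap.comp_assoc, hΦ_equiv, LinearMap.comp_assoc, ← map_comp,
    LinearMap.id_comp, LinearMap.comp_id]

lemma rackMul_self_distrib (hΦ_comul : comul ∘ₗ Φ = map Φ Φ ∘ₗ comulB)
    (hℓ_mul : ∀ (h h' : H) (b : B), ℓ ((h * h') ⊗ₜ[K] b) = ℓ (h ⊗ₜ[K] ℓ (h' ⊗ₜ[K] b)))
    (hΦ_equiv : Φ ∘ₗ ℓ = adjointMap K H ∘ₗ map LinearMap.id Φ) :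
    rackMul Φ ℓ ∘ₗ map LinearMap.id (rackMul Φ ℓ)
      = rackMul Φ ℓ ∘ₗ map (rackMul Φ ℓ) (rackMul Φ ℓ) ∘ₗ
          (tensorTensorTensorComm K B B B B).toLinearMap ∘ₗ map comulB LinearMap.id := by
  ext a b c
  obtain ⟨S, hS⟩ := exists_finset (R := K) (comulB a)
  have hΦℓ (h : H) (b : B) : Φ (ℓ (h ⊗ₜ b)) = adjointMap K H (h ⊗ₜ Φ b) :=
    LinearMap.congr_fun hΦ_equiv (h ⊗ₜ b)
  calc ℓ (Φ a ⊗ₜ ℓ (Φ b ⊗ₜ c)) = ℓ ((Φ a * Φ b) ⊗ₜ c) := (hℓ_mul _ _ _).symm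
    _ = ℓ ((∑ i ∈ S, adjointMap K H (Φ i.1 ⊗ₜ Φ b) * Φ i.2) ⊗ₜ c) := by
        rw [← sum_adjointMap_mul_of_repr (reprOfMap hΦ_comul hS)]
        rfl
    _ = _ := by simp [hS, sum_tmul, map_sum, hΦℓ, hℓ_mul]

lemma rackMul_comp_rackMul_antipode_comp_comul (hΦ_comul : comul ∘ₗ Φ = map Φ Φ ∘ₗ comulB)
    (hΦ_counit : counit ∘ₗ Φ = counitB) (hℓ_one : ∀ b : B, ℓ ((1 : H) ⊗ₜ[K] b) = b)
    (hℓ_mul : ∀ (h h' : H) (b : B), ℓ ((h * h') ⊗ₜ[K] b) = ℓ (h ⊗ₜ[K] ℓ (h' ⊗ₜ[K] b))) :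
    rackMul Φ ℓ ∘ₗ map LinearMap.id (rackMul (antipode K ∘ₗ Φ) ℓ) ∘ₗ
        (TensorProduct.assoc K B B B).toLinearMap ∘ₗ map comulB LinearMap.id
      = (TensorProduct.lid K B).toLinearMap ∘ₗ map counitB LinearMap.id := by
  rw [← LinearMap.comp_assoc (map comulB LinearMap.id),
    ← LinearMap.comp_assoc (map comulB LinearMap.id) _ (rackMul Φ ℓ),
    rackMul_comp_lTensor_rackMul hℓ_mul, rackMul_comp_rTensor, LinearMap.comp_assoc,
    mul'_map_self_antipode_comp_comul hΦ_comul hΦ_counit, rackMul_algebraMap_comp hℓ_one]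

lemma rackMul_antipode_comp_rackMul_comp_comul (hΦ_comul : comul ∘ₗ Φ = map Φ Φ ∘ₗ comulB)
    (hΦ_counit : counit ∘ₗ Φ = counitB) (hℓ_one : ∀ b : B, ℓ ((1 : H) ⊗ₜ[K] b) = b)
    (hℓ_mul : ∀ (h h' : H) (b : B), ℓ ((h * h') ⊗ₜ[K] b) = ℓ (h ⊗ₜ[K] ℓ (h' ⊗ₜ[K] b))) :
    rackMul (antipode K ∘ₗ Φ) ℓ ∘ₗ map LinearMap.id (rackMul Φ ℓ) ∘ₗ
        (TensorProduct.assoc K B B B).toLinearMap ∘ₗ map comulB LinearMap.id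
      = (TensorProduct.lid K B).toLinearMap ∘ₗ map counitB LinearMap.id := by
  rw [← LinearMap.comp_assoc (map comulB LinearMap.id),
    ← LinearMap.comp_assoc (map comulB LinearMap.id) _ (rackMul (antipode K ∘ₗ Φ) ℓ),
    rackMul_comp_lTensor_rackMul hℓ_mul, rackMul_comp_rTensor, LinearMap.comp_assoc,
    mul'_map_antipode_comp_self_comul hΦ_comul hΦ_counit, rackMul_algebraMap_comp hℓ_one]

lemma isRackBialgebra_rackMul {oneB : B} (hB : IsC3Coalgebra K B comulB counitB oneB)
    (hΦ_comul : comul ∘ₗ Φ = map Φ Φ ∘ₗ comulB) (hΦ_counit : counit ∘ₗ Φ = counitB)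
    (hΦ_one : Φ oneB = 1) (hℓ_one : ∀ b : B, ℓ ((1 : H) ⊗ₜ[K] b) = b)
    (hℓ_mul : ∀ (h h' : H) (b : B), ℓ ((h * h') ⊗ₜ[K] b) = ℓ (h ⊗ₜ[K] ℓ (h' ⊗ₜ[K] b)))
    (hℓ_comul : comulB ∘ₗ ℓ = map ℓ ℓ ∘ₗ (tensorTensorTensorComm K H H B B).toLinearMap ∘ₗ
        map comul comulB)
    (hℓ_counit : counitB ∘ₗ ℓ = LinearMap.mul' K K ∘ₗ map counit counitB)
    (hℓ_oneB : ∀ h : H, ℓ (h ⊗ₜ[K] oneB) = counit (R := K) h • oneB)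
    (hΦ_equiv : Φ ∘ₗ ℓ = adjointMap K H ∘ₗ map LinearMap.id Φ) :
    IsRackBialgebra K B comulB counitB oneB (rackMul Φ ℓ) where
  isC3 := hB
  comul_mul := comul_comp_rackMul hΦ_comul hℓ_comul
  counit_mul := counit_comp_rackMul hΦ_counit hℓ_counit
  one_mul := rackMul_one_tmul hΦ_one hℓ_one
  mul_one := rackMul_tmul_one hΦ_counit hℓ_oneB
  self_distrib := rackMul_self_distrib hΦ_comul hℓ_mul hΦ_equiv

end AugmentedRackBialgebra

theorem augmented_rack_bialgebra_is_rack_bialgebra_general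
    (K : Type*) [CommRing K]
    (B : Type*) [AddCommGroup B] [Module K B]
    (comulB : B →ₗ[K] B ⊗[K] B) (counitB : B →ₗ[K] K) (oneB : B)
    (hB : IsC3Coalgebra K B comulB counitB oneB)
    (H : Type*) [Ring H] [HopfAlgebra K H]
    (Φ : B →ₗ[K] H)
    (hΦ_comul : Coalgebra.comul ∘ₗ Φ = TensorProduct.map Φ Φ ∘ₗ comulB)
    (hΦ_counit : Coalgebra.counit ∘ₗ Φ = counitB)
    (hΦ_one : Φ oneB = 1)
    (ℓ : H ⊗[K] B →ₗ[K] B)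
    (hℓ_one : ∀ b : B, ℓ ((1 : H) ⊗ₜ[K] b) = b)
    (hℓ_mul : ∀ (h h' : H) (b : B), ℓ ((h * h') ⊗ₜ[K] b) = ℓ (h ⊗ₜ[K] ℓ (h' ⊗ₜ[K] b)))
    (hℓ_comul : comulB ∘ₗ ℓ = TensorProduct.map ℓ ℓ ∘ₗ
        (tensorTensorTensorComm K H H B B).toLinearMap ∘ₗ
        TensorProduct.map Coalgebra.comul comulB)
    (hℓ_counit : counitB ∘ₗ ℓ
        = LinearMap.mul' K K ∘ₗ TensorProduct.map Coalgebra.counit counitB)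
    (hℓ_oneB : ∀ h : H, ℓ (h ⊗ₜ[K] oneB) = Coalgebra.counit (R := K) h • oneB)
    (hΦ_equiv : Φ ∘ₗ ℓ = adjointMap K H ∘ₗ TensorProduct.map LinearMap.id Φ) :
    IsRackBialgebra K B comulB counitB oneB (ℓ ∘ₗ TensorProduct.map Φ LinearMap.id) ∧
    ((ℓ ∘ₗ TensorProduct.map Φ LinearMap.id) ∘ₗ
        TensorProduct.map LinearMap.id
          (ℓ ∘ₗ TensorProduct.map (HopfAlgebra.antipode (R := K) ∘ₗ Φ) LinearMap.id) ∘ₗ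
        (TensorProduct.assoc K B B B).toLinearMap ∘ₗ TensorProduct.map comulB LinearMap.id
      = (TensorProduct.lid K B).toLinearMap ∘ₗ TensorProduct.map counitB LinearMap.id) ∧
    ((ℓ ∘ₗ TensorProduct.map (HopfAlgebra.antipode (R := K) ∘ₗ Φ) LinearMap.id) ∘ₗ
        TensorProduct.map LinearMap.id (ℓ ∘ₗ TensorProduct.map Φ LinearMap.id) ∘ₗ
        (TensorProduct.assoc K B B B).toLinearMap ∘ₗ TensorProduct.map comulB LinearMap.id
      = (TensorProduct.lid K B).toLinearMap ∘ₗ TensorProduct.map counitB LinearMap.id) ∧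
    (Φ ∘ₗ (ℓ ∘ₗ TensorProduct.map Φ LinearMap.id)
      = adjointMap K H ∘ₗ TensorProduct.map Φ Φ) :=
  ⟨isRackBialgebra_rackMul hB hΦ_comul hΦ_counit hΦ_one hℓ_one hℓ_mul hℓ_comul hℓ_counit hℓ_oneB
      hΦ_equiv,
    rackMul_comp_rackMul_antipode_comp_comul hΦ_comul hΦ_counit hℓ_one hℓ_mul,
    rackMul_antipode_comp_rackMul_comp_comul hΦ_comul hΦ_counit hℓ_one hℓ_mul,
    comp_rackMul_eq_adjointMap hΦ_equiv⟩

/-- Let `(B, Φ, H, ℓ)` be an augmented rack bialgebra over `K`.  Then `B`,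
with multiplication `a ▹ b := Φ(a).b`, is a rack bialgebra; it is left-regular, namely
`μ'(a ⊗ b) := S(Φ(a)).b` satisfies
`Σ a⁽¹⁾ ▹ μ'(a⁽²⁾ ⊗ b) = ε(a) b = Σ μ'(a⁽¹⁾ ⊗ (a⁽²⁾ ▹ b))`; and `Φ` is multiplicative for
the rack products: `Φ(a ▹ b) = ad_{Φ(a)}(Φ(b))`. -/
theorem augmented_rack_bialgebra_is_rack_bialgebra
    (K : Type*) [CommRing K] [Algebra ℚ K]
    (B : Type*) [AddCommGroup B] [Module K B]
    (comulB : B →ₗ[K] B ⊗[K] B) (counitB : B →ₗ[K] K) (oneB : B)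
    (hB : IsC3Coalgebra K B comulB counitB oneB)
    (H : Type*) [Ring H] [HopfAlgebra K H]
    (cocommH : ∀ h : H,
      (TensorProduct.comm K H H) (Coalgebra.comul h) = Coalgebra.comul (R := K) h)
    (Φ : B →ₗ[K] H)
    (hΦ_comul : Coalgebra.comul ∘ₗ Φ = TensorProduct.map Φ Φ ∘ₗ comulB)
    (hΦ_counit : Coalgebra.counit ∘ₗ Φ = counitB)
    (hΦ_one : Φ oneB = 1)
    (ℓ : H ⊗[K] B →ₗ[K] B)
    (hℓ_one : ∀ b : B, ℓ ((1 : H) ⊗ₜ[K] b) = b)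
    (hℓ_mul : ∀ (h h' : H) (b : B), ℓ ((h * h') ⊗ₜ[K] b) = ℓ (h ⊗ₜ[K] ℓ (h' ⊗ₜ[K] b)))
    (hℓ_comul : comulB ∘ₗ ℓ = TensorProduct.map ℓ ℓ ∘ₗ
        (tensorTensorTensorComm K H H B B).toLinearMap ∘ₗ
        TensorProduct.map Coalgebra.comul comulB)
    (hℓ_counit : counitB ∘ₗ ℓ
        = LinearMap.mul' K K ∘ₗ TensorProduct.map Coalgebra.counit counitB)
    (hℓ_oneB : ∀ h : H, ℓ (h ⊗ₜ[K] oneB) = Coalgebra.counit (R := K) h • oneB)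
    (hΦ_equiv : Φ ∘ₗ ℓ = adjointMap K H ∘ₗ TensorProduct.map LinearMap.id Φ) :
    IsRackBialgebra K B comulB counitB oneB (ℓ ∘ₗ TensorProduct.map Φ LinearMap.id) ∧
    ((ℓ ∘ₗ TensorProduct.map Φ LinearMap.id) ∘ₗ
        TensorProduct.map LinearMap.id
          (ℓ ∘ₗ TensorProduct.map (HopfAlgebra.antipode (R := K) ∘ₗ Φ) LinearMap.id) ∘ₗ
        (TensorProduct.assoc K B B B).toLinearMap ∘ₗ TensorProduct.map comulB LinearMap.id
      = (TensorProduct.lid K B).toLinearMap ∘ₗ TensorProduct.map counitB LinearMap.id) ∧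
    ((ℓ ∘ₗ TensorProduct.map (HopfAlgebra.antipode (R := K) ∘ₗ Φ) LinearMap.id) ∘ₗ
        TensorProduct.map LinearMap.id (ℓ ∘ₗ TensorProduct.map Φ LinearMap.id) ∘ₗ
        (TensorProduct.assoc K B B B).toLinearMap ∘ₗ TensorProduct.map comulB LinearMap.id
      = (TensorProduct.lid K B).toLinearMap ∘ₗ TensorProduct.map counitB LinearMap.id) ∧
    (Φ ∘ₗ (ℓ ∘ₗ TensorProduct.map Φ LinearMap.id)
      = adjointMap K H ∘ₗ TensorProduct.map Φ Φ) :=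
  augmented_rack_bialgebra_is_rack_bialgebra_general K B comulB counitB oneB hB H Φ hΦ_comul
    hΦ_counit hΦ_one ℓ hℓ_one hℓ_mul hℓ_comul hℓ_counit hℓ_oneB hΦ_equiv

end RackPaper
end

section
/- Let (B,Δ,ε,1,▹) be a rack bialgebra over K. Then: (i) for every a ∈ B and every primitive x ∈ B, the element a▹x is primitive; (ii) for all primitive x,y,z ∈ B, x▹(y▹z) = (x▹y)▹z + y▹(x▹z). Consequently Prim(B), equipped with [x,y] := x▹y, is a (left) Leibniz algebra over K, and every morphism of rack bialgebras restricts to a morphism of these Leibniz algebras. -/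
open TensorProduct

namespace RackPaper

variable (K : Type*) [CommRing K]
variable (B : Type*) [AddCommGroup B] [Module K B]

/-- An element `x` is primitive: `Δ(x) = x ⊗ 1 + 1 ⊗ x`. -/
def IsPrimitive (comul : B →ₗ[K] B ⊗[K] B) (one : B) (x : B) : Prop :=
  comul x = x ⊗ₜ[K] one + one ⊗ₜ[K] x

/-- Let `(B, Δ, ε, 1, ▹)` be a rack bialgebra over `K`.  Then:
(i) for every `a ∈ B` and every primitive `x ∈ B`, the element `a ▹ x` is primitive;
(ii) for all primitive `x, y, z ∈ B`, `x ▹ (y ▹ z) = (x ▹ y) ▹ z + y ▹ (x ▹ z)`.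
Consequently `Prim(B)` with `[x,y] := x ▹ y` is a (left) Leibniz algebra over `K`, and
every morphism of rack bialgebras restricts to a morphism of these Leibniz algebras
(in particular it maps primitive elements to primitive elements). -/
theorem rack_bialgebra_primitives_leibniz
    (K : Type*) [CommRing K] [Algebra ℚ K]
    (B : Type*) [AddCommGroup B] [Module K B]
    (comul : B →ₗ[K] B ⊗[K] B) (counit : B →ₗ[K] K) (one : B) (mul : B ⊗[K] B →ₗ[K] B)
    (hB : IsRackBialgebra K B comul counit one mul)
    (B' : Type*) [AddCommGroup B'] [Module K B']
    (comul' : B' →ₗ[K] B' ⊗[K] B') (counit' : B' →ₗ[K] K) (one' : B')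
    (mul' : B' ⊗[K] B' →ₗ[K] B')
    (hB' : IsRackBialgebra K B' comul' counit' one' mul')
    (φ : B →ₗ[K] B')
    (hφ_comul : comul' ∘ₗ φ = TensorProduct.map φ φ ∘ₗ comul)
    (hφ_counit : counit' ∘ₗ φ = counit)
    (hφ_one : φ one = one')
    (hφ_mul : φ ∘ₗ mul = mul' ∘ₗ TensorProduct.map φ φ) :
    (∀ (a x : B), IsPrimitive K B comul one x → IsPrimitive K B comul one (mul (a ⊗ₜ[K] x))) ∧
    (∀ x y z : B, IsPrimitive K B comul one x → IsPrimitive K B comul one y →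
      IsPrimitive K B comul one z →
      mul (x ⊗ₜ[K] mul (y ⊗ₜ[K] z))
        = mul (mul (x ⊗ₜ[K] y) ⊗ₜ[K] z) + mul (y ⊗ₜ[K] mul (x ⊗ₜ[K] z))) ∧
    (∀ x : B, IsPrimitive K B comul one x → IsPrimitive K B' comul' one' (φ x)) ∧
    (∀ x y : B, IsPrimitive K B comul one x → IsPrimitive K B comul one y →
      φ (mul (x ⊗ₜ[K] y)) = mul' (φ x ⊗ₜ[K] φ y)) := by

  obtain ⟨hC3, hcm, hcu, honemul, hmulone, hsd⟩ := hB
  -- key linear identities, proved for arbitrary u : B ⊗ B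
  have hS1 : ∀ (x : B) (u : B ⊗[K] B),
      (TensorProduct.map mul mul) ((tensorTensorTensorComm K B B B B) (u ⊗ₜ[K] (x ⊗ₜ[K] one)))
        = mul (((TensorProduct.rid K B) ((TensorProduct.map LinearMap.id counit) u)) ⊗ₜ[K] x)
            ⊗ₜ[K] one := by
    intro x u
    induction u using TensorProduct.induction_on with
    | zero => simp
    | tmul p q =>
        simp [TensorProduct.tensorTensorTensorComm_tmul, hmulone,
          ← TensorProduct.smul_tmul', TensorProduct.tmul_smul]
    | add u v hu hv =>
        simp only [TensorProduct.add_tmul, map_add, hu, hv, TensorProduct.tmul_add]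
  have hS2 : ∀ (x : B) (u : B ⊗[K] B),
      (TensorProduct.map mul mul) ((tensorTensorTensorComm K B B B B) (u ⊗ₜ[K] (one ⊗ₜ[K] x)))
        = one ⊗ₜ[K]
            mul (((TensorProduct.lid K B) ((TensorProduct.map counit LinearMap.id) u)) ⊗ₜ[K] x) := by
    intro x u
    induction u using TensorProduct.induction_on with
    | zero => simp
    | tmul p q =>
        simp [TensorProduct.tensorTensorTensorComm_tmul, hmulone,
          ← TensorProduct.smul_tmul', TensorProduct.tmul_smul]
    | add u v hu hv =>
        simp only [TensorProduct.add_tmul, map_add, hu, hv, TensorProduct.tmul_add]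
  have e1 : ∀ a : B,
      (TensorProduct.rid K B) ((TensorProduct.map LinearMap.id counit) (comul a)) = a := by
    intro a
    have := LinearMap.congr_fun hC3.comul_counit a
    simpa using this
  have e2 : ∀ a : B,
      (TensorProduct.lid K B) ((TensorProduct.map counit LinearMap.id) (comul a)) = a := by
    intro a
    have := LinearMap.congr_fun hC3.counit_comul a
    simpa using this
  have prim : ∀ (a x : B), IsPrimitive K B comul one x →
      IsPrimitive K B comul one (mul (a ⊗ₜ[K] x)) := by
    intro a x hx
    have h1 := LinearMap.congr_fun hcm (a ⊗ₜ[K] x)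
    simp only [LinearMap.comp_apply, comul2, LinearEquiv.coe_coe,
      TensorProduct.map_tmul] at h1
    rw [hx, TensorProduct.tmul_add, map_add, map_add, hS1, hS2, e1, e2] at h1
    exact h1
  refine ⟨prim, ?_, ?_, ?_⟩
  · intro x y z hx _ _
    have h := LinearMap.congr_fun hsd (x ⊗ₜ[K] (y ⊗ₜ[K] z))
    simp only [LinearMap.comp_apply, TensorProduct.map_tmul, LinearMap.id_coe, id_eq,
      LinearEquiv.coe_coe] at h
    rw [hx, TensorProduct.add_tmul, map_add,
      TensorProduct.tensorTensorTensorComm_tmul, TensorProduct.tensorTensorTensorComm_tmul,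
      map_add, TensorProduct.map_tmul, TensorProduct.map_tmul, map_add] at h
    simp only [honemul] at h
    exact h
  · intro x hx
    have h := LinearMap.congr_fun hφ_comul x
    simp only [LinearMap.comp_apply] at h
    rw [hx, map_add, TensorProduct.map_tmul, TensorProduct.map_tmul, hφ_one] at h
    exact h
  · intro x y _ _
    have h := LinearMap.congr_fun hφ_mul (x ⊗ₜ[K] y)
    simpa using h

end RackPaper
end

section
/- Let (B,Δ,ε,1,▹) be a rack bialgebra over K. For every k ∈ ℕ, the subcoalgebra of order k, B₍ₖ₎, is stable under every left ▹-multiplication: a▹x ∈ B₍ₖ₎ for all a ∈ B and x ∈ B₍ₖ₎. In particular each B₍ₖ₎, with the restricted structure maps, is itself a rack bialgebra. -/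
open TensorProduct

namespace RackPaper

variable (K : Type*) [CommRing K]
variable (B : Type*) [AddCommGroup B] [Module K B]

/-- The linear map `x ↦ Δ(x) - x ⊗ 1 - 1 ⊗ x`. -/
noncomputable def deltaPrime (comul : B →ₗ[K] B ⊗[K] B) (one : B) : B →ₗ[K] B ⊗[K] B :=
  comul - ((TensorProduct.mk K B B).flip one) - (TensorProduct.mk K B B one)

/-- The subcoalgebra of order `k`:  `B₍₀₎ = K·1` and
`B₍ₖ₊₁₎ = {x | Δ(x) - x ⊗ 1 - 1 ⊗ x ∈ B₍ₖ₎ ⊗ B₍ₖ₎}`. -/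
noncomputable def ordSub (comul : B →ₗ[K] B ⊗[K] B) (one : B) : ℕ → Submodule K B
  | 0 => Submodule.span K {one}
  | k + 1 => Submodule.comap (deltaPrime K B comul one)
      (LinearMap.range (TensorProduct.mapIncl (ordSub comul one k) (ordSub comul one k)))

lemma tmul_mem_range_mapIncl {P Q : Submodule K B} {p q : B}
    (hp : p ∈ P) (hq : q ∈ Q) :
    p ⊗ₜ[K] q ∈ LinearMap.range (TensorProduct.mapIncl P Q) :=
  ⟨⟨p, hp⟩ ⊗ₜ ⟨q, hq⟩, rfl⟩

lemma range_mapIncl_induction {P Q : Submodule K B} (C : B ⊗[K] B → Prop)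
    (h0 : C 0) (hadd : ∀ u v, C u → C v → C (u + v))
    (hpure : ∀ p q, p ∈ P → q ∈ Q → C (p ⊗ₜ[K] q)) :
    ∀ w ∈ LinearMap.range (TensorProduct.mapIncl P Q), C w := by
  rintro w ⟨s, rfl⟩
  induction s using TensorProduct.induction_on with
  | zero => simpa using h0
  | tmul p q => exact hpure p q p.2 q.2
  | add u v hu hv => rw [map_add]; exact hadd _ _ hu hv

lemma range_mapIncl_mono' {P P' Q Q' : Submodule K B} (hP : P ≤ P') (hQ : Q ≤ Q') :
    LinearMap.range (TensorProduct.mapIncl P Q) ≤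
      LinearMap.range (TensorProduct.mapIncl P' Q') := by
  intro w hw
  refine range_mapIncl_induction K B
    (C := fun w => w ∈ LinearMap.range (TensorProduct.mapIncl P' Q')) ?_ ?_ ?_ w hw
  · exact Submodule.zero_mem _
  · intro u v hu hv; exact Submodule.add_mem _ hu hv
  · intro p q hp hq; exact tmul_mem_range_mapIncl K B (hP hp) (hQ hq)

lemma deltaPrime_apply (comul : B →ₗ[K] B ⊗[K] B) (one x : B) :
    deltaPrime K B comul one x = comul x - x ⊗ₜ[K] one - one ⊗ₜ[K] x := rfl

lemma mem_ordSub_succ (comul : B →ₗ[K] B ⊗[K] B) (one : B) (k : ℕ) (x : B) :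
    x ∈ ordSub K B comul one (k + 1) ↔
      deltaPrime K B comul one x ∈ LinearMap.range
        (TensorProduct.mapIncl (ordSub K B comul one k) (ordSub K B comul one k)) := by
  rw [ordSub]; exact Submodule.mem_comap

lemma ordSub_mono (comul : B →ₗ[K] B ⊗[K] B) (one : B)
    (h1 : comul one = one ⊗ₜ[K] one) :
    ∀ k, ordSub K B comul one k ≤ ordSub K B comul one (k + 1) := by
  intro k
  induction k with
  | zero =>
    intro x hx
    rw [ordSub] at hx
    obtain ⟨c, rfl⟩ := Submodule.mem_span_singleton.mp hx
    rw [mem_ordSub_succ, map_smul, deltaPrime_apply, h1]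
    have h2 : (one ⊗ₜ[K] one : B ⊗[K] B) - one ⊗ₜ[K] one - one ⊗ₜ[K] one
        = -(one ⊗ₜ[K] one) := by abel
    rw [h2]
    exact Submodule.smul_mem _ _ (Submodule.neg_mem _
      (tmul_mem_range_mapIncl K B (Submodule.mem_span_singleton_self one)
        (Submodule.mem_span_singleton_self one)))
  | succ k IH =>
    intro x hx
    rw [mem_ordSub_succ] at hx ⊢
    exact range_mapIncl_mono' K B IH IH hx

lemma G_right_one (counit : B →ₗ[K] K) (one : B) (mul : B ⊗[K] B →ₗ[K] B)
    (hmul1 : ∀ a : B, mul (a ⊗ₜ[K] one) = counit a • one) (x : B) (t : B ⊗[K] B) :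
    (TensorProduct.map mul mul) ((tensorTensorTensorComm K B B B B) (t ⊗ₜ (x ⊗ₜ[K] one)))
      = mul (((TensorProduct.rid K B).toLinearMap
          ((TensorProduct.map LinearMap.id counit) t)) ⊗ₜ[K] x) ⊗ₜ[K] one := by
  induction t using TensorProduct.induction_on with
  | zero => simp
  | tmul p q =>
    rw [TensorProduct.tensorTensorTensorComm_tmul, TensorProduct.map_tmul, hmul1 q,
      TensorProduct.map_tmul]
    simp [TensorProduct.smul_tmul', TensorProduct.tmul_smul, map_smul]
    simp [← TensorProduct.smul_tmul', TensorProduct.tmul_smul]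
  | add u v hu hv =>
    simp only [TensorProduct.add_tmul, TensorProduct.tmul_add, map_add, hu, hv]

lemma G_left_one (counit : B →ₗ[K] K) (one : B) (mul : B ⊗[K] B →ₗ[K] B)
    (h1mul : ∀ a : B, mul (one ⊗ₜ[K] a) = a)
    (hmul1 : ∀ a : B, mul (a ⊗ₜ[K] one) = counit a • one) (x : B) (t : B ⊗[K] B) :
    (TensorProduct.map mul mul) ((tensorTensorTensorComm K B B B B) (t ⊗ₜ (one ⊗ₜ[K] x)))
      = one ⊗ₜ[K] mul (((TensorProduct.lid K B).toLinearMap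
          ((TensorProduct.map counit LinearMap.id) t)) ⊗ₜ[K] x) := by
  induction t using TensorProduct.induction_on with
  | zero => simp
  | tmul p q =>
    rw [TensorProduct.tensorTensorTensorComm_tmul, TensorProduct.map_tmul, hmul1 p,
      TensorProduct.map_tmul]
    simp [TensorProduct.smul_tmul', TensorProduct.tmul_smul, map_smul]
    simp [← TensorProduct.smul_tmul', TensorProduct.tmul_smul]
  | add u v hu hv =>
    simp only [TensorProduct.add_tmul, TensorProduct.tmul_add, map_add, hu, hv]

/-- Let `(B, Δ, ε, 1, ▹)` be a rack bialgebra over `K`.  For every `k ∈ ℕ`,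
the subcoalgebra of order `k`, `B₍ₖ₎`, is stable under every left `▹`-multiplication:
`a ▹ x ∈ B₍ₖ₎` for all `a ∈ B` and `x ∈ B₍ₖ₎`.  In particular each `B₍ₖ₎` (with the restricted
structure maps) is itself a rack bialgebra: it contains `1` and is a subcoalgebra, i.e.
`Δ` maps `B₍ₖ₎` into `B₍ₖ₎ ⊗ B₍ₖ₎`. -/
theorem rack_bialgebra_ordSub_stable
    (K : Type*) [CommRing K] [Algebra ℚ K]
    (B : Type*) [AddCommGroup B] [Module K B]
    (comul : B →ₗ[K] B ⊗[K] B) (counit : B →ₗ[K] K) (one : B) (mul : B ⊗[K] B →ₗ[K] B)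
    (hB : IsRackBialgebra K B comul counit one mul) :
    ∀ k : ℕ,
      (∀ (a x : B), x ∈ ordSub K B comul one k → mul (a ⊗ₜ[K] x) ∈ ordSub K B comul one k) ∧
      one ∈ ordSub K B comul one k ∧
      (∀ x : B, x ∈ ordSub K B comul one k →
        comul x ∈ LinearMap.range
          (TensorProduct.mapIncl (ordSub K B comul one k) (ordSub K B comul one k))) := by
  intro k
  induction k with
  | zero =>
    refine ⟨?_, Submodule.mem_span_singleton_self one, ?_⟩
    · intro a x hx
      rw [ordSub] at hx ⊢
      obtain ⟨c, rfl⟩ := Submodule.mem_span_singleton.mp hx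
      rw [TensorProduct.tmul_smul, map_smul, hB.mul_one a]
      exact Submodule.smul_mem _ _
        (Submodule.smul_mem _ _ (Submodule.mem_span_singleton_self one))
    · intro x hx
      rw [ordSub] at hx
      obtain ⟨c, rfl⟩ := Submodule.mem_span_singleton.mp hx
      rw [map_smul, hB.isC3.comul_one]
      refine Submodule.smul_mem _ _ (tmul_mem_range_mapIncl K B ?_ ?_) <;>
        · rw [ordSub]; exact Submodule.mem_span_singleton_self one
  | succ k IH =>
    obtain ⟨stab, hone, _hcom⟩ := IH
    have hmono := ordSub_mono K B comul one hB.isC3.comul_one k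
    have honeS : one ∈ ordSub K B comul one (k + 1) := hmono hone
    have stab' : ∀ a x, x ∈ ordSub K B comul one (k + 1) →
        mul (a ⊗ₜ[K] x) ∈ ordSub K B comul one (k + 1) := by
      intro a x hx
      rw [mem_ordSub_succ] at hx
      set w := deltaPrime K B comul one x with hwdef
      have hcx : comul x = w + x ⊗ₜ[K] one + one ⊗ₜ[K] x := by
        rw [hwdef, deltaPrime_apply]; abel
      have hA : comul (mul (a ⊗ₜ[K] x)) =
          (TensorProduct.map mul mul)
            ((tensorTensorTensorComm K B B B B) (comul a ⊗ₜ comul x)) := by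
        have h := LinearMap.congr_fun hB.comul_mul (a ⊗ₜ[K] x)
        simpa [comul2, LinearMap.comp_apply] using h
      have hGw : (TensorProduct.map mul mul)
          ((tensorTensorTensorComm K B B B B) (comul a ⊗ₜ w)) ∈
          LinearMap.range (TensorProduct.mapIncl (ordSub K B comul one k)
            (ordSub K B comul one k)) := by
        refine range_mapIncl_induction K B
          (C := fun w => (TensorProduct.map mul mul)
            ((tensorTensorTensorComm K B B B B) (comul a ⊗ₜ w)) ∈
            LinearMap.range (TensorProduct.mapIncl (ordSub K B comul one k)
              (ordSub K B comul one k))) ?_ ?_ ?_ w hx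
        · simp
        · intro u v hu hv
          rw [TensorProduct.tmul_add, map_add, map_add]
          exact Submodule.add_mem _ hu hv
        · intro p q hp hq
          induction comul a using TensorProduct.induction_on with
          | zero => simp
          | tmul r s =>
            rw [TensorProduct.tensorTensorTensorComm_tmul, TensorProduct.map_tmul]
            exact tmul_mem_range_mapIncl K B (stab r p hp) (stab s q hq)
          | add u v hu hv =>
            rw [TensorProduct.add_tmul, map_add, map_add]
            exact Submodule.add_mem _ hu hv
      have hB1 : (TensorProduct.map mul mul)
          ((tensorTensorTensorComm K B B B B) (comul a ⊗ₜ (x ⊗ₜ[K] one)))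
          = mul (a ⊗ₜ[K] x) ⊗ₜ[K] one := by
        rw [G_right_one K B counit one mul hB.mul_one x (comul a)]
        have h := LinearMap.congr_fun hB.isC3.comul_counit a
        simp only [LinearMap.comp_apply, LinearMap.id_apply] at h
        rw [h]
      have hC1 : (TensorProduct.map mul mul)
          ((tensorTensorTensorComm K B B B B) (comul a ⊗ₜ (one ⊗ₜ[K] x)))
          = one ⊗ₜ[K] mul (a ⊗ₜ[K] x) := by
        rw [G_left_one K B counit one mul hB.one_mul hB.mul_one x (comul a)]
        have h := LinearMap.congr_fun hB.isC3.counit_comul a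
        simp only [LinearMap.comp_apply, LinearMap.id_apply] at h
        rw [h]
      rw [mem_ordSub_succ, deltaPrime_apply, hA, hcx, TensorProduct.tmul_add,
        TensorProduct.tmul_add, map_add, map_add, map_add, map_add, hB1, hC1]
      have heq : (TensorProduct.map mul mul)
            ((tensorTensorTensorComm K B B B B) (comul a ⊗ₜ w))
            + mul (a ⊗ₜ[K] x) ⊗ₜ[K] one + one ⊗ₜ[K] mul (a ⊗ₜ[K] x)
            - mul (a ⊗ₜ[K] x) ⊗ₜ[K] one - one ⊗ₜ[K] mul (a ⊗ₜ[K] x)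
          = (TensorProduct.map mul mul)
            ((tensorTensorTensorComm K B B B B) (comul a ⊗ₜ w)) := by abel
      rw [heq]
      exact hGw
    refine ⟨stab', honeS, ?_⟩
    intro x hx
    have hd := (mem_ordSub_succ K B comul one k x).mp hx
    have hcx : comul x = deltaPrime K B comul one x + x ⊗ₜ[K] one + one ⊗ₜ[K] x := by
      rw [deltaPrime_apply]; abel
    rw [hcx]
    exact Submodule.add_mem _
      (Submodule.add_mem _ (range_mapIncl_mono' K B hmono hmono hd)
        (tmul_mem_range_mapIncl K B hx honeS))
      (tmul_mem_range_mapIncl K B honeS hx)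

end RackPaper
end

section
/- Let (B,Δ,ε,1,μ) be a nonassociative C³I-bialgebra over K. (i) If μ′ and μ″ both witness left-regularity of B, then μ′ = μ″. (ii) If in addition Δ is cocommutative and μ′ witnesses left-regularity, then μ′ is a morphism of C³-coalgebras B⊗B → B (it preserves comultiplication, counit and sends 1⊗1 to 1). -/
/-!
Write `L a = μ(a ⊗ -)` and `L' a = μ'(a ⊗ -)`. Left-regularity says exactly that `L'` is a
two-sided inverse of `L` in the convolution algebra `Hom(B, End B)`, so it is unique.

Applying `ε` to `∑ μ(a₍₁₎ ⊗ μ'(a₍₂₎ ⊗ b)) = ε(a) b` shows that `μ'` preserves the counit, and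
evaluating `∑ μ'(a₍₁₎ ⊗ μ(a₍₂₎ ⊗ b)) = ε(a) b` at `1 ⊗ 1` gives `μ'(1 ⊗ 1) = 1`.

For the comultiplication, `f ↦ (a ↦ ∑ f a₍₁₎ ⊗ f a₍₂₎)` is a monoid morphism
`Hom(B, End B) → Hom(B, End (B ⊗ B))` when `Δ` is cocommutative, so it maps `L'` to the inverse of
the image of `L`. Comultiplicativity of `μ` says that this image intertwines `Δ` with `L`, and such
an intertwining relation passes to convolution inverses once `Δ` has a left inverse, here
`ε ⊗ id`. This yields comultiplicativity of `μ'`.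
-/

open TensorProduct

namespace RackPaper

variable (K : Type*) [CommRing K]
variable (B : Type*) [AddCommGroup B] [Module K B]

/-- A nonassociative C³I-bialgebra: a C³-coalgebra with a multiplication which is
a morphism of C³-coalgebras. -/
structure IsC3IBialgebra (comul : B →ₗ[K] B ⊗[K] B) (counit : B →ₗ[K] K) (one : B)
    (mul : B ⊗[K] B →ₗ[K] B) : Prop where
  isC3 : IsC3Coalgebra K B comul counit one
  comul_mul : comul ∘ₗ mul = (TensorProduct.map mul mul) ∘ₗ comul2 K B comul
  counit_mul : counit ∘ₗ mul = counit2 K B counit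
  mul_one_one : mul (one ⊗ₜ[K] one) = one

/-- `μ'` witnesses the left-regularity of `(B, Δ, ε, 1, μ)`:
`Σ μ(a⁽¹⁾ ⊗ μ'(a⁽²⁾ ⊗ b)) = ε(a) b = Σ μ'(a⁽¹⁾ ⊗ μ(a⁽²⁾ ⊗ b))`. -/
def LeftRegularWitness (comul : B →ₗ[K] B ⊗[K] B) (counit : B →ₗ[K] K)
    (mul mul' : B ⊗[K] B →ₗ[K] B) : Prop :=
  (mul ∘ₗ TensorProduct.map LinearMap.id mul' ∘ₗ (TensorProduct.assoc K B B B).toLinearMap ∘ₗ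
      TensorProduct.map comul LinearMap.id
    = (TensorProduct.lid K B).toLinearMap ∘ₗ TensorProduct.map counit LinearMap.id) ∧
  (mul' ∘ₗ TensorProduct.map LinearMap.id mul ∘ₗ (TensorProduct.assoc K B B B).toLinearMap ∘ₗ
      TensorProduct.map comul LinearMap.id
    = (TensorProduct.lid K B).toLinearMap ∘ₗ TensorProduct.map counit LinearMap.id)

open Coalgebra LinearMap WithConv

section Convolution

variable {R C M V W : Type*} [CommSemiring R] [AddCommMonoid C] [Module R C] [Coalgebra R C]
  [AddCommMonoid M] [Module R M] [AddCommMonoid V] [Module R V] [AddCommMonoid W] [Module R W]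

theorem comp_eq_comp_of_convMul_eq_one (ι : V →ₗ[R] W) (ρ : W →ₗ[R] V) (hρι : ρ ∘ₗ ι = .id)
    {X X' : WithConv (C →ₗ[R] Module.End R V)} {Y Y' : WithConv (C →ₗ[R] Module.End R W)}
    (hX : X * X' = 1) (hY : Y' * Y = 1) (h : ∀ c, Y c ∘ₗ ι = ι ∘ₗ X c) (c : C) :
    Y' c ∘ₗ ι = ι ∘ₗ X' c := by
  -- `γ X' = Y' * Y * γ X' = Y' * γ (X * X') = Y' * γ 1`, and `γ 1` is right multiplication
  -- by `ι ∘ ρ`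
  let γ : Module.End R V →ₗ[R] Module.End R W := llcomp R W V W ι ∘ₗ lcomp R V ρ
  have hγ (T : Module.End R V) : γ T = ι ∘ₗ T ∘ₗ ρ := rfl
  have hYγ : Y * toConv (γ ∘ₗ X'.ofConv) = toConv (γ ∘ₗ (X * X').ofConv) := by
    have : mul' R _ ∘ₗ map Y.ofConv (γ ∘ₗ X'.ofConv) =
        γ ∘ₗ mul' R _ ∘ₗ map X.ofConv X'.ofConv := by
      refine TensorProduct.ext' fun x y => ?_
      simp [hγ, Module.End.mul_eq_comp, ← comp_assoc, h x]
    simp only [LinearMap.convMul_def, ofConv_toConv, ← comp_assoc, this]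
  have hγ_one : toConv (γ ∘ₗ (1 : WithConv (C →ₗ[R] Module.End R V)).ofConv) =
      MulOpposite.op (ι ∘ₗ ρ) • 1 := by
    ext c w
    simp [hγ]
  have key : toConv (γ ∘ₗ X'.ofConv) = MulOpposite.op (ι ∘ₗ ρ) • Y' := calc
    _ = Y' * (Y * toConv (γ ∘ₗ X'.ofConv)) := by rw [← mul_assoc, hY, one_mul]
    _ = MulOpposite.op (ι ∘ₗ ρ) • Y' := by rw [hYγ, hX, hγ_one, mul_smul_comm, mul_one]
  simpa [hγ, Module.End.mul_eq_comp, comp_assoc, hρι] using congr($key c ∘ₗ ι).symm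

noncomputable def tensorSelf (f : WithConv (C →ₗ[R] Module.End R M)) :
    WithConv (C →ₗ[R] Module.End R (M ⊗[R] M)) :=
  toConv (Module.endTensorEndAlgHom.toLinearMap ∘ₗ map f.ofConv f.ofConv ∘ₗ comul)

lemma tensorSelf_mul [IsCocomm R C] (f g : WithConv (C →ₗ[R] Module.End R M)) :
    tensorSelf (f * g) = tensorSelf f * tensorSelf g := by
  -- cocommutativity makes `comul` a coalgebra morphism, through which convolution distributes
  have h (k : WithConv (C →ₗ[R] Module.End R M)) : tensorSelf k =
      toConv (Module.endTensorEndAlgHom.toLinearMap ∘ₗ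
        (toConv ((toConv (map k.ofConv k.ofConv)).ofConv ∘ₗ
          (comulCoalgHom R C).toLinearMap)).ofConv) := rfl
  rw [h, ← map_convMul_map, convMul_comp_coalgHom_distrib, algHom_comp_convMul_distrib,
    toConv_ofConv]
  rfl

lemma tensorSelf_one : tensorSelf (1 : WithConv (C →ₗ[R] Module.End R M)) = 1 := by
  ext c x y
  conv_rhs => rw [← sum_counit_smul (ℛ R c)]
  simp only [tensorSelf, ofConv_toConv, comp_apply, ← (ℛ R c).eq]
  simp [map_sum, Module.endTensorEndAlgHom_apply, Module.algebraMap_end_apply, smul_tmul',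
    smul_smul, mul_comm]

end Convolution

variable {K B}

abbrev IsC3Coalgebra.toCoalgebra {comul : B →ₗ[K] B ⊗[K] B} {counit : B →ₗ[K] K} {one : B}
    (h : IsC3Coalgebra K B comul counit one) : Coalgebra K B where
  comul := comul
  counit := counit
  coassoc := h.coassoc
  rTensor_counit_comp_comul := LinearMap.ext fun a => (TensorProduct.lid K B).injective <| by
    simpa [rTensor_def] using LinearMap.congr_fun h.counit_comul a
  lTensor_counit_comp_comul := LinearMap.ext fun a => (TensorProduct.rid K B).injective <| by
    simpa [lTensor_def] using LinearMap.congr_fun h.comul_counit a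

section LeftRegular

variable [Coalgebra K B]

lemma convMul_curry_apply (m m' : B ⊗[K] B →ₗ[K] B) (a b : B) :
    (toConv (curry m) * toConv (curry m')) a b =
      m (map id m' (TensorProduct.assoc K B B B (comul a ⊗ₜ b))) := by
  rw [convMul_apply]
  induction comul (R := K) a with
  | zero => simp
  | tmul x y => simp
  | add s t hs ht => simp [add_tmul, hs, ht]

lemma convMul_curry_eq_one_iff (m m' : B ⊗[K] B →ₗ[K] B) :
    toConv (curry m) * toConv (curry m') = 1 ↔
      m ∘ₗ map id m' ∘ₗ (TensorProduct.assoc K B B B).toLinearMap ∘ₗ map comul id =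
        (TensorProduct.lid K B).toLinearMap ∘ₗ map counit id := by
  constructor
  · intro h
    refine TensorProduct.curry_injective (LinearMap.ext₂ fun a b => ?_)
    have := congr($h a b)
    rw [convMul_curry_apply] at this
    simpa using this
  · intro h
    refine WithConv.ext (LinearMap.ext₂ fun a b => ?_)
    have := congr($h (a ⊗ₜ b))
    rw [convMul_curry_apply]
    simpa using this

lemma leftRegularWitness_iff (m m' : B ⊗[K] B →ₗ[K] B) :
    LeftRegularWitness K B comul counit m m' ↔
      toConv (curry m) * toConv (curry m') = 1 ∧ toConv (curry m') * toConv (curry m) = 1 :=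
  and_congr (convMul_curry_eq_one_iff m m').symm (convMul_curry_eq_one_iff m' m).symm

lemma tensorSelf_curry_apply_comul (m : B ⊗[K] B →ₗ[K] B) (a b : B) :
    tensorSelf (toConv (curry m)) a (comul b) = map m m (comul2 K B comul (a ⊗ₜ b)) := by
  simp only [tensorSelf, comul2, ofConv_toConv, comp_apply, AlgHom.toLinearMap_apply, map_tmul,
    LinearEquiv.coe_coe]
  induction comul (R := K) a with
  | zero => simp
  | add s t hs ht => simp [add_tmul, hs, ht]
  | tmul x y =>
    rw [map_tmul, Module.endTensorEndAlgHom_apply]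
    induction comul (R := K) b with
    | zero => simp
    | add s t hs ht => simp [tmul_add, hs, ht]
    | tmul z w => simp

lemma comul_comp_eq_map_comp_comul2_iff (m : B ⊗[K] B →ₗ[K] B) :
    comul ∘ₗ m = map m m ∘ₗ comul2 K B comul ↔
      ∀ a, tensorSelf (toConv (curry m)) a ∘ₗ comul = comul ∘ₗ curry m a := by
  constructor
  · intro h a
    ext b
    simpa [tensorSelf_curry_apply_comul] using congr($h (a ⊗ₜ b)).symm
  · intro h
    refine TensorProduct.ext' fun a b => ?_
    simpa [tensorSelf_curry_apply_comul] using congr($(h a) b).symm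

namespace LeftRegularWitness

variable {m m' : B ⊗[K] B →ₗ[K] B}

theorem unique {m'' : B ⊗[K] B →ₗ[K] B} (h' : LeftRegularWitness K B comul counit m m')
    (h'' : LeftRegularWitness K B comul counit m m'') : m' = m'' := by
  rw [leftRegularWitness_iff] at h' h''
  exact curry_injective (toConv_injective (left_inv_eq_right_inv h'.2 h''.1))

theorem counit_comp (hm : counit ∘ₗ m = counit2 K B counit)
    (h : LeftRegularWitness K B comul counit m m') : counit ∘ₗ m' = counit2 K B counit := by
  have hm_apply (x y : B) : counit (R := K) (m (x ⊗ₜ y)) = counit x * counit y := by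
    simpa [counit2] using congr($hm (x ⊗ₜ y))
  refine TensorProduct.ext' fun a b => ?_
  -- apply `ε` to `∑ μ(a₍₁₎ ⊗ μ'(a₍₂₎ ⊗ b)) = ε(a) b`, then use `∑ ε(a₍₁₎) a₍₂₎ = a`
  have hab := congrArg (counit (R := K)) (LinearMap.congr_fun h.1 (a ⊗ₜ b))
  simp only [comp_apply, LinearEquiv.coe_coe, map_tmul, id_apply, ← (ℛ K a).eq, sum_tmul,
    map_sum, assoc_tmul, hm_apply, lid_tmul, map_smul, smul_eq_mul] at hab
  conv_lhs => rw [← sum_counit_smul (ℛ K a)]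
  simpa [counit2, map_sum, sum_tmul, ← smul_tmul'] using hab

theorem apply_tmul_eq_of_isGroupLikeElem {one : B} (hone : IsGroupLikeElem K one)
    (hm : m (one ⊗ₜ one) = one) (h : LeftRegularWitness K B comul counit m m') :
    m' (one ⊗ₜ one) = one := by
  simpa [hone.comul_eq_tmul_self, hm, hone.counit_eq_one] using LinearMap.congr_fun h.2 (one ⊗ₜ one)

theorem comul_comp [IsCocomm K B] (hm : comul ∘ₗ m = map m m ∘ₗ comul2 K B comul)
    (h : LeftRegularWitness K B comul counit m m') :
    comul ∘ₗ m' = map m' m' ∘ₗ comul2 K B comul := by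
  obtain ⟨hLL', hL'L⟩ := (leftRegularWitness_iff m m').1 h
  have hinv : tensorSelf (toConv (curry m')) * tensorSelf (toConv (curry m)) = 1 := by
    rw [← tensorSelf_mul, hL'L, tensorSelf_one]
  exact (comul_comp_eq_map_comp_comul2_iff m').2 <| comp_eq_comp_of_convMul_eq_one comul
    (TensorProduct.lift (lsmul K B ∘ₗ counit)) lift_lsmul_comp_counit_comp_comul hLL' hinv
    ((comul_comp_eq_map_comp_comul2_iff m).1 hm)

end LeftRegularWitness

end LeftRegular

theorem leftRegular_witness_unique_and_coalgebra_morphism_general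
    (K : Type*) [CommRing K]
    (B : Type*) [AddCommGroup B] [Module K B]
    (comul : B →ₗ[K] B ⊗[K] B) (counit : B →ₗ[K] K) (one : B) (mul : B ⊗[K] B →ₗ[K] B)
    (hB : IsC3IBialgebra K B comul counit one mul) :
    (∀ mul' mul'' : B ⊗[K] B →ₗ[K] B,
      LeftRegularWitness K B comul counit mul mul' →
      LeftRegularWitness K B comul counit mul mul'' → mul' = mul'') ∧
    ((∀ x : B, (TensorProduct.comm K B B) (comul x) = comul x) →
      ∀ mul' : B ⊗[K] B →ₗ[K] B, LeftRegularWitness K B comul counit mul mul' →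
        (comul ∘ₗ mul' = (TensorProduct.map mul' mul') ∘ₗ comul2 K B comul) ∧
        (counit ∘ₗ mul' = counit2 K B counit) ∧
        mul' (one ⊗ₜ[K] one) = one) := by
  let _ : Coalgebra K B := hB.isC3.toCoalgebra
  refine ⟨fun mul' mul'' h' h'' => h'.unique h'', fun hcomm mul' h => ?_⟩
  have : IsCocomm K B := ⟨LinearMap.ext hcomm⟩
  exact ⟨h.comul_comp hB.comul_mul, h.counit_comp hB.counit_mul,
    h.apply_tmul_eq_of_isGroupLikeElem ⟨hB.isC3.counit_one, hB.isC3.comul_one⟩ hB.mul_one_one⟩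

/-- Let `(B, Δ, ε, 1, μ)` be a nonassociative C³I-bialgebra over `K`.
(i) If `μ'` and `μ''` both witness left-regularity of `B`, then `μ' = μ''`.
(ii) If in addition `Δ` is cocommutative and `μ'` witnesses left-regularity, then `μ'` is a
morphism of C³-coalgebras `B ⊗ B → B`: it preserves the comultiplication and the counit,
and sends `1 ⊗ 1` to `1`. -/
theorem leftRegular_witness_unique_and_coalgebra_morphism
    (K : Type*) [CommRing K] [Algebra ℚ K]
    (B : Type*) [AddCommGroup B] [Module K B]
    (comul : B →ₗ[K] B ⊗[K] B) (counit : B →ₗ[K] K) (one : B) (mul : B ⊗[K] B →ₗ[K] B)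
    (hB : IsC3IBialgebra K B comul counit one mul) :
    (∀ mul' mul'' : B ⊗[K] B →ₗ[K] B,
      LeftRegularWitness K B comul counit mul mul' →
      LeftRegularWitness K B comul counit mul mul'' → mul' = mul'') ∧
    ((∀ x : B, (TensorProduct.comm K B B) (comul x) = comul x) →
      ∀ mul' : B ⊗[K] B →ₗ[K] B, LeftRegularWitness K B comul counit mul mul' →
        (comul ∘ₗ mul' = (TensorProduct.map mul' mul') ∘ₗ comul2 K B comul) ∧
        (counit ∘ₗ mul' = counit2 K B counit) ∧
        mul' (one ⊗ₜ[K] one) = one) :=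
  leftRegular_witness_unique_and_coalgebra_morphism_general K B comul counit one mul hB

end RackPaper
end

section
/- Let (A,Δ,ε,1,⊢,⊣,S) be a cocommutative Hopf dialgebra over K and define a▹b := Σ (a⁽¹⁾⊢b)⊣S(a⁽²⁾). Then for all a,b,c ∈ A: (i) a▹(b▹c) = (a⊢b)▹c = (a⊣b)▹c; (ii) Δ(a▹b) = Σ (a⁽¹⁾▹b⁽¹⁾)⊗(a⁽²⁾▹b⁽²⁾); (iii) a▹(b⊢c) = Σ (a⁽¹⁾▹b)⊢(a⁽²⁾▹c) and a▹(b⊣c) = Σ (a⁽¹⁾▹b)⊣(a⁽²⁾▹c); (iv) (A,Δ,ε,1,▹) is a cocommutative rack bialgebra, i.e. in addition 1▹a = a, a▹1 = ε(a)1, and a▹(b▹c) = Σ (a⁽¹⁾▹b)▹(a⁽²⁾▹c). -/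
open TensorProduct

namespace RackPaper

variable (K : Type*) [CommRing K]
variable (B : Type*) [AddCommGroup B] [Module K B]

/-- A cocommutative Hopf dialgebra `(A, Δ, ε, 1, ⊢, ⊣, S)`: a cocommutative C³-coalgebra
such that `(A, 1, ⊢, ⊣)` is a bar-unital balanced dialgebra, `⊢` and `⊣` are morphisms of
C³-coalgebras, and `S` is a morphism of C³-coalgebras which is a right antipode for `⊢`
and a left antipode for `⊣`. -/
structure IsHopfDialgebra (comul : B →ₗ[K] B ⊗[K] B) (counit : B →ₗ[K] K) (one : B)
    (vd dv : B ⊗[K] B →ₗ[K] B) (S : B →ₗ[K] B) : Prop where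
  isC3 : IsC3Coalgebra K B comul counit one
  cocomm : ∀ x : B, (TensorProduct.comm K B B) (comul x) = comul x
  comul_vd : comul ∘ₗ vd = (TensorProduct.map vd vd) ∘ₗ comul2 K B comul
  counit_vd : counit ∘ₗ vd = counit2 K B counit
  comul_dv : comul ∘ₗ dv = (TensorProduct.map dv dv) ∘ₗ comul2 K B comul
  counit_dv : counit ∘ₗ dv = counit2 K B counit
  vd_assoc : ∀ a b c : B, vd (vd (a ⊗ₜ[K] b) ⊗ₜ[K] c) = vd (a ⊗ₜ[K] vd (b ⊗ₜ[K] c))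
  dv_assoc : ∀ a b c : B, dv (dv (a ⊗ₜ[K] b) ⊗ₜ[K] c) = dv (a ⊗ₜ[K] dv (b ⊗ₜ[K] c))
  di_ax1 : ∀ a b c : B, vd (vd (a ⊗ₜ[K] b) ⊗ₜ[K] c) = vd (dv (a ⊗ₜ[K] b) ⊗ₜ[K] c)
  di_ax2 : ∀ a b c : B, dv (a ⊗ₜ[K] dv (b ⊗ₜ[K] c)) = dv (a ⊗ₜ[K] vd (b ⊗ₜ[K] c))
  di_ax3 : ∀ a b c : B, dv (vd (a ⊗ₜ[K] b) ⊗ₜ[K] c) = vd (a ⊗ₜ[K] dv (b ⊗ₜ[K] c))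
  one_vd : ∀ a : B, vd (one ⊗ₜ[K] a) = a
  dv_one : ∀ a : B, dv (a ⊗ₜ[K] one) = a
  balanced : ∀ a : B, vd (a ⊗ₜ[K] one) = dv (one ⊗ₜ[K] a)
  right_antipode_vd : ∀ a : B,
    vd ((TensorProduct.map LinearMap.id S) (comul a)) = counit a • one
  left_antipode_dv : ∀ a : B,
    dv ((TensorProduct.map S LinearMap.id) (comul a)) = counit a • one

/-- The rack multiplication `a ▹ b := Σ (a⁽¹⁾ ⊢ b) ⊣ S(a⁽²⁾)` of a Hopf dialgebra. -/
noncomputable def dialgebraRack (comul : B →ₗ[K] B ⊗[K] B)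
    (vd dv : B ⊗[K] B →ₗ[K] B) (S : B →ₗ[K] B) : B ⊗[K] B →ₗ[K] B :=
  dv ∘ₗ TensorProduct.map vd S ∘ₗ (TensorProduct.assoc K B B B).symm.toLinearMap ∘ₗ
    TensorProduct.map LinearMap.id (TensorProduct.comm K B B).toLinearMap ∘ₗ
    (TensorProduct.assoc K B B B).toLinearMap ∘ₗ
    TensorProduct.map comul LinearMap.id


section PairLemma
variable {K : Type*} [CommRing K] {C M : Type*} [AddCommGroup C] [Module K C]
  [AddCommGroup M] [Module K M]

lemma map_map_apply {P Q R S T U : Type*} [AddCommGroup P] [Module K P] [AddCommGroup Q] [Module K Q]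
    [AddCommGroup R] [Module K R] [AddCommGroup S] [Module K S] [AddCommGroup T] [Module K T]
    [AddCommGroup U] [Module K U]
    (f : R →ₗ[K] T) (g : S →ₗ[K] U) (h : P →ₗ[K] R) (k : Q →ₗ[K] S) (x : P ⊗[K] Q) :
    map f g (map h k x) = map (f ∘ₗ h) (g ∘ₗ k) x := by
  rw [TensorProduct.map_comp]; rfl

theorem pair_lemma (Dc : C →ₗ[K] C ⊗[K] C) (Ec : C →ₗ[K] K)
    (hco : (TensorProduct.assoc K C C C).toLinearMap ∘ₗ (map Dc LinearMap.id) ∘ₗ Dc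
      = (map LinearMap.id Dc) ∘ₗ Dc)
    (hcl : (TensorProduct.lid K C).toLinearMap ∘ₗ (map Ec LinearMap.id) ∘ₗ Dc = LinearMap.id)
    (hcr : (TensorProduct.rid K C).toLinearMap ∘ₗ (map LinearMap.id Ec) ∘ₗ Dc = LinearMap.id)
    (vdM dvM : M ⊗[K] M →ₗ[K] M) (oneM : M)
    (hd1 : ∀ x y z : M, dvM (x ⊗ₜ[K] vdM (y ⊗ₜ[K] z)) = dvM (dvM (x ⊗ₜ[K] y) ⊗ₜ[K] z))
    (hone : ∀ m : M, dvM (m ⊗ₜ[K] oneM) = m)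
    (P F G : C →ₗ[K] M)
    (hF : dvM ∘ₗ map F P ∘ₗ Dc = LinearMap.toSpanSingleton K M oneM ∘ₗ Ec)
    (hG : vdM ∘ₗ map P G ∘ₗ Dc = LinearMap.toSpanSingleton K M oneM ∘ₗ Ec) :
    ∀ c : C, F c = dvM (oneM ⊗ₜ[K] G c) := by
  intro c
  have stepA : ∀ v : C ⊗[K] C,
      dvM ((map F (LinearMap.toSpanSingleton K M oneM ∘ₗ Ec)) v)
        = F ((TensorProduct.rid K C) ((map LinearMap.id Ec) v)) := by
    intro v
    induction v using TensorProduct.induction_on with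
    | zero => simp
    | tmul x y =>
        simp [LinearMap.toSpanSingleton_apply, tmul_smul, hone]
    | add x y hx hy => simp [map_add, hx, hy]
  have stepB : ∀ v : C ⊗[K] C,
      dvM ((map (LinearMap.toSpanSingleton K M oneM ∘ₗ Ec) G) v)
        = dvM (oneM ⊗ₜ[K] G ((TensorProduct.lid K C) ((map Ec LinearMap.id) v))) := by
    intro v
    induction v using TensorProduct.induction_on with
    | zero => simp
    | tmul x y =>
        simp [LinearMap.toSpanSingleton_apply, smul_tmul', lid_tmul, tmul_smul]
    | add x y hx hy => simp [map_add, tmul_add, hx, hy]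
  have stepP : ∀ w : (C ⊗[K] C) ⊗[K] C,
      dvM ((map F (vdM ∘ₗ map P G)) ((TensorProduct.assoc K C C C) w))
        = dvM ((map (dvM ∘ₗ map F P) G) w) := by
    intro w
    induction w using TensorProduct.induction_on with
    | zero => simp
    | tmul t z =>
        induction t using TensorProduct.induction_on with
        | zero => simp
        | tmul x y => simp [hd1]
        | add s t hs ht => simp only [add_tmul, map_add] at *; rw [hs, ht]
    | add x y hx hy => simp [map_add, hx, hy]
  have hcr' : (TensorProduct.rid K C) ((map LinearMap.id Ec) (Dc c)) = c := by
    have := LinearMap.congr_fun hcr c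
    simpa using this
  have hcl' : (TensorProduct.lid K C) ((map Ec LinearMap.id) (Dc c)) = c := by
    have := LinearMap.congr_fun hcl c
    simpa using this
  have hco' : (TensorProduct.assoc K C C C) ((map Dc LinearMap.id) (Dc c))
      = (map LinearMap.id Dc) (Dc c) := by
    have := LinearMap.congr_fun hco c
    simpa using this
  calc F c = dvM ((map F (LinearMap.toSpanSingleton K M oneM ∘ₗ Ec)) (Dc c)) := by
              rw [stepA, hcr']
    _ = dvM ((map F (vdM ∘ₗ map P G ∘ₗ Dc)) (Dc c)) := by rw [← hG]
    _ = dvM ((map F (vdM ∘ₗ map P G)) ((map LinearMap.id Dc) (Dc c))) := by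
          rw [map_map_apply]; simp [LinearMap.comp_id, LinearMap.comp_assoc]
    _ = dvM ((map F (vdM ∘ₗ map P G)) ((TensorProduct.assoc K C C C)
            ((map Dc LinearMap.id) (Dc c)))) := by rw [hco']
    _ = dvM ((map (dvM ∘ₗ map F P) G) ((map Dc LinearMap.id) (Dc c))) := stepP _
    _ = dvM ((map (dvM ∘ₗ map F P ∘ₗ Dc) G) (Dc c)) := by
          rw [map_map_apply]; simp [LinearMap.comp_id, LinearMap.comp_assoc]
    _ = dvM ((map (LinearMap.toSpanSingleton K M oneM ∘ₗ Ec) G) (Dc c)) := by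
          rw [hF]
    _ = dvM (oneM ⊗ₜ[K] G c) := by rw [stepB, hcl']

end PairLemma
section Hopf
variable {K : Type*} [CommRing K] {A : Type*} [AddCommGroup A] [Module K A]
variable {comul : A →ₗ[K] A ⊗[K] A} {counit : A →ₗ[K] K} {one : A}
variable {vd dv : A ⊗[K] A →ₗ[K] A} {S : A →ₗ[K] A}

namespace HopfAux

variable (hA : IsHopfDialgebra K A comul counit one vd dv S)
include hA

lemma counit_left (a : A) :
    (TensorProduct.lid K A) ((map counit LinearMap.id) (comul a)) = a := by
  have := LinearMap.congr_fun hA.isC3.counit_comul a; simpa using this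

lemma counit_right (a : A) :
    (TensorProduct.rid K A) ((map LinearMap.id counit) (comul a)) = a := by
  have := LinearMap.congr_fun hA.isC3.comul_counit a; simpa using this

lemma coassoc_el (a : A) :
    (TensorProduct.assoc K A A A) ((map comul LinearMap.id) (comul a))
      = (map LinearMap.id comul) (comul a) := by
  have := LinearMap.congr_fun hA.isC3.coassoc a; simpa using this

lemma comul_vd_el (w : A ⊗[K] A) :
    comul (vd w) = map vd vd (comul2 K A comul w) := by
  have := LinearMap.congr_fun hA.comul_vd w; simpa using this

lemma comul_dv_el (w : A ⊗[K] A) :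
    comul (dv w) = map dv dv (comul2 K A comul w) := by
  have := LinearMap.congr_fun hA.comul_dv w; simpa using this

lemma counit_vd_el (w : A ⊗[K] A) :
    counit (vd w) = counit2 K A counit w := by
  have := LinearMap.congr_fun hA.counit_vd w; simpa using this

lemma counit_dv_el (w : A ⊗[K] A) :
    counit (dv w) = counit2 K A counit w := by
  have := LinearMap.congr_fun hA.counit_dv w; simpa using this

lemma counit2_tmul (x y : A) :
    counit2 K A counit (x ⊗ₜ[K] y) = counit x * counit y := by
  simp [counit2]

lemma comul2_tmul (x y : A) :
    comul2 K A comul (x ⊗ₜ[K] y)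
      = (tensorTensorTensorComm K A A A A) (comul x ⊗ₜ[K] comul y) := by
  simp [comul2]

/-- `S 1 = 1`. -/
lemma S_one : S one = one := by
  have h := hA.left_antipode_dv one
  rw [hA.isC3.comul_one, hA.isC3.counit_one, one_smul] at h
  simpa [hA.dv_one] using h

/-- pure computation: `mul' ∘ (counit ⊗ f)` collapses. -/
lemma mul_counit_aux (f : A →ₗ[K] K) (v : A ⊗[K] A) :
    LinearMap.mul' K K ((map counit f) v)
      = f ((TensorProduct.lid K A) ((map counit LinearMap.id) v)) := by
  induction v using TensorProduct.induction_on with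
  | zero => simp
  | tmul x y => simp [LinearMap.mul'_apply, lid_tmul, smul_eq_mul]
  | add x y hx hy => simp only [map_add, hx, hy]

/-- `ε ∘ S = ε`. -/
lemma counit_S (a : A) : counit (S a) = counit a := by
  have h := hA.right_antipode_vd a
  have h2 := congrArg counit h
  rw [counit_vd_el hA] at h2
  have h3 : counit2 K A counit ((map LinearMap.id S) (comul a))
      = LinearMap.mul' K K ((map counit (counit ∘ₗ S)) (comul a)) := by
    simp only [counit2, LinearMap.comp_apply, map_map_apply, LinearMap.comp_id, LinearMap.id_comp]
  rw [h3, mul_counit_aux hA, counit_left hA] at h2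
  simpa [hA.isC3.counit_one] using h2

/-- `counit2 ∘ comul = counit`. -/
lemma counit2_comul (a : A) : counit2 K A counit (comul a) = counit a := by
  have : counit2 K A counit (comul a)
      = LinearMap.mul' K K ((map counit counit) (comul a)) := rfl
  rw [this, mul_counit_aux hA counit, counit_left hA]

/-- dialgebra: `x ⊣ (y ⊢ z) = (x ⊣ y) ⊣ z`. -/
lemma dd1 (x y z : A) : dv (x ⊗ₜ[K] vd (y ⊗ₜ[K] z)) = dv (dv (x ⊗ₜ[K] y) ⊗ₜ[K] z) := by
  rw [← hA.di_ax2, hA.dv_assoc]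

/-- `1 ⊣ S x = S x`. -/
lemma S_eL (x : A) : dv (one ⊗ₜ[K] S x) = S x := by
  have h := pair_lemma comul counit hA.isC3.coassoc hA.isC3.counit_comul hA.isC3.comul_counit
    vd dv one (dd1 hA) hA.dv_one LinearMap.id S S ?_ ?_ x
  · exact h.symm
  · apply LinearMap.ext; intro a
    simpa [LinearMap.toSpanSingleton_apply] using hA.left_antipode_dv a
  · apply LinearMap.ext; intro a
    simpa [LinearMap.toSpanSingleton_apply] using hA.right_antipode_vd a

/-- `S x ⊢ 1 = S x`. -/
lemma S_eR (x : A) : vd (S x ⊗ₜ[K] one) = S x := by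
  rw [hA.balanced, S_eL hA]

end HopfAux
end Hopf

section Generic
variable {K : Type*} [CommRing K]

lemma ttt_nat {M N P Q M' N' P' Q' : Type*}
    [AddCommGroup M] [Module K M] [AddCommGroup N] [Module K N]
    [AddCommGroup P] [Module K P] [AddCommGroup Q] [Module K Q]
    [AddCommGroup M'] [Module K M'] [AddCommGroup N'] [Module K N']
    [AddCommGroup P'] [Module K P'] [AddCommGroup Q'] [Module K Q']
    (f : M →ₗ[K] M') (g : N →ₗ[K] N') (h : P →ₗ[K] P') (k : Q →ₗ[K] Q')
    (x : (M ⊗[K] N) ⊗[K] (P ⊗[K] Q)) :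
    (tensorTensorTensorComm K M' N' P' Q') (map (map f g) (map h k) x)
      = map (map f h) (map g k) ((tensorTensorTensorComm K M N P Q) x) := by
  have : (tensorTensorTensorComm K M' N' P' Q').toLinearMap ∘ₗ map (map f g) (map h k)
      = map (map f h) (map g k) ∘ₗ (tensorTensorTensorComm K M N P Q).toLinearMap := by
    ext m n p q; simp
  exact LinearMap.congr_fun this x

end Generic

section Hopf2
set_option linter.unusedSectionVars false
variable {K : Type*} [CommRing K] {A : Type*} [AddCommGroup A] [Module K A]
variable {comul : A →ₗ[K] A ⊗[K] A} {counit : A →ₗ[K] K} {one : A}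
variable {vd dv : A ⊗[K] A →ₗ[K] A} {S : A →ₗ[K] A}

namespace HopfAux

variable (hA : IsHopfDialgebra K A comul counit one vd dv S)
include hA

/-- counit law for `comul2`, left. -/
lemma cl2 : (TensorProduct.lid K (A ⊗[K] A)).toLinearMap ∘ₗ
    (map (counit2 K A counit) LinearMap.id) ∘ₗ comul2 K A comul = LinearMap.id := by
  apply TensorProduct.ext'
  intro a b
  have pure : ∀ u v : A ⊗[K] A,
      (TensorProduct.lid K (A ⊗[K] A)) ((map (counit2 K A counit) LinearMap.id)
        ((tensorTensorTensorComm K A A A A) (u ⊗ₜ[K] v)))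
      = ((TensorProduct.lid K A) ((map counit LinearMap.id) u)) ⊗ₜ[K]
        ((TensorProduct.lid K A) ((map counit LinearMap.id) v)) := by
    intro u v
    induction u using TensorProduct.induction_on with
    | zero => simp
    | add x y hx hy => simp only [add_tmul, tmul_add, map_add, hx, hy, add_tmul]
    | tmul x1 x2 =>
      induction v using TensorProduct.induction_on with
      | zero => simp
      | add x y hx hy => simp only [add_tmul, tmul_add, map_add, hx, hy]
      | tmul y1 y2 =>
        simp [counit2_tmul hA, smul_tmul', tmul_smul, smul_smul, mul_comm]
  simp only [LinearMap.comp_apply, LinearMap.id_apply, LinearMap.id_coe, id_eq,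
    LinearEquiv.coe_coe, comul2_tmul hA, pure, counit_left hA]

/-- counit law for `comul2`, right. -/
lemma cr2 : (TensorProduct.rid K (A ⊗[K] A)).toLinearMap ∘ₗ
    (map LinearMap.id (counit2 K A counit)) ∘ₗ comul2 K A comul = LinearMap.id := by
  apply TensorProduct.ext'
  intro a b
  have pure : ∀ u v : A ⊗[K] A,
      (TensorProduct.rid K (A ⊗[K] A)) ((map LinearMap.id (counit2 K A counit))
        ((tensorTensorTensorComm K A A A A) (u ⊗ₜ[K] v)))
      = ((TensorProduct.rid K A) ((map LinearMap.id counit) u)) ⊗ₜ[K]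
        ((TensorProduct.rid K A) ((map LinearMap.id counit) v)) := by
    intro u v
    induction u using TensorProduct.induction_on with
    | zero => simp
    | add x y hx hy => simp only [add_tmul, tmul_add, map_add, hx, hy, add_tmul]
    | tmul x1 x2 =>
      induction v using TensorProduct.induction_on with
      | zero => simp
      | add x y hx hy => simp only [add_tmul, tmul_add, map_add, hx, hy]
      | tmul y1 y2 =>
        simp [counit2_tmul hA, smul_tmul', tmul_smul, smul_smul, mul_comm]
  simp only [LinearMap.comp_apply, LinearMap.id_apply, LinearMap.id_coe, id_eq,
    LinearEquiv.coe_coe, comul2_tmul hA, pure, counit_right hA]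

/-- coassociativity for `comul2`. -/
lemma co2 : (TensorProduct.assoc K (A ⊗[K] A) (A ⊗[K] A) (A ⊗[K] A)).toLinearMap ∘ₗ
    (map (comul2 K A comul) LinearMap.id) ∘ₗ comul2 K A comul
    = (map LinearMap.id (comul2 K A comul)) ∘ₗ comul2 K A comul := by
  apply TensorProduct.ext'
  intro a b
  have pureA : ∀ u v : A ⊗[K] A,
      (TensorProduct.assoc K (A ⊗[K] A) (A ⊗[K] A) (A ⊗[K] A))
        ((map (comul2 K A comul) LinearMap.id) ((tensorTensorTensorComm K A A A A) (u ⊗ₜ[K] v)))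
      = (TensorProduct.assoc K (A ⊗[K] A) (A ⊗[K] A) (A ⊗[K] A))
          ((map (tensorTensorTensorComm K A A A A).toLinearMap LinearMap.id)
            ((tensorTensorTensorComm K (A ⊗[K] A) A (A ⊗[K] A) A)
              ((map comul LinearMap.id u) ⊗ₜ[K] (map comul LinearMap.id v)))) := by
    intro u v
    induction u using TensorProduct.induction_on with
    | zero => simp
    | add x y hx hy => simp only [add_tmul, tmul_add, map_add, hx, hy]
    | tmul x1 x2 =>
      induction v using TensorProduct.induction_on with
      | zero => simp
      | add x y hx hy => simp only [add_tmul, tmul_add, map_add, hx, hy]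
      | tmul y1 y2 => simp [comul2_tmul hA]
  have pureB : ∀ u v : A ⊗[K] A,
      (map LinearMap.id (comul2 K A comul)) ((tensorTensorTensorComm K A A A A) (u ⊗ₜ[K] v))
      = (map LinearMap.id (tensorTensorTensorComm K A A A A).toLinearMap)
          ((tensorTensorTensorComm K A (A ⊗[K] A) A (A ⊗[K] A))
            ((map LinearMap.id comul u) ⊗ₜ[K] (map LinearMap.id comul v))) := by
    intro u v
    induction u using TensorProduct.induction_on with
    | zero => simp
    | add x y hx hy => simp only [add_tmul, tmul_add, map_add, hx, hy]
    | tmul x1 x2 =>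
      induction v using TensorProduct.induction_on with
      | zero => simp
      | add x y hx hy => simp only [add_tmul, tmul_add, map_add, hx, hy]
      | tmul y1 y2 => simp [comul2_tmul hA]
  have pureC : ∀ w1 w2 : (A ⊗[K] A) ⊗[K] A,
      (TensorProduct.assoc K (A ⊗[K] A) (A ⊗[K] A) (A ⊗[K] A))
        ((map (tensorTensorTensorComm K A A A A).toLinearMap LinearMap.id)
          ((tensorTensorTensorComm K (A ⊗[K] A) A (A ⊗[K] A) A) (w1 ⊗ₜ[K] w2)))
      = (map LinearMap.id (tensorTensorTensorComm K A A A A).toLinearMap)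
          ((tensorTensorTensorComm K A (A ⊗[K] A) A (A ⊗[K] A))
            (((TensorProduct.assoc K A A A) w1) ⊗ₜ[K] ((TensorProduct.assoc K A A A) w2))) := by
    intro w1 w2
    induction w1 using TensorProduct.induction_on with
    | zero => simp
    | add x y hx hy => simp only [add_tmul, tmul_add, map_add, hx, hy]
    | tmul t1 r1 =>
      induction w2 using TensorProduct.induction_on with
      | zero => simp
      | add x y hx hy => simp only [add_tmul, tmul_add, map_add, hx, hy]
      | tmul t2 r2 =>
        induction t1 using TensorProduct.induction_on with
        | zero => simp
        | add x y hx hy => simp only [add_tmul, tmul_add, map_add, hx, hy]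
        | tmul p1 q1 =>
          induction t2 using TensorProduct.induction_on with
          | zero => simp
          | add x y hx hy => simp only [add_tmul, tmul_add, map_add, hx, hy]
          | tmul p2 q2 => simp
  simp only [LinearMap.comp_apply, LinearEquiv.coe_coe, comul2_tmul hA]
  rw [pureA, pureC, coassoc_el hA, coassoc_el hA, ← pureB]

end HopfAux
end Hopf2

section Hopf3
set_option linter.unusedSectionVars false
variable {K : Type*} [CommRing K] {A : Type*} [AddCommGroup A] [Module K A]
variable {comul : A →ₗ[K] A ⊗[K] A} {counit : A →ₗ[K] K} {one : A}
variable {vd dv : A ⊗[K] A →ₗ[K] A} {S : A →ₗ[K] A}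

namespace HopfAux

variable (hA : IsHopfDialgebra K A comul counit one vd dv S)
include hA

lemma hGvd : vd ∘ₗ map vd (vd ∘ₗ map S S ∘ₗ (TensorProduct.comm K A A).toLinearMap)
    ∘ₗ comul2 K A comul = LinearMap.toSpanSingleton K A one ∘ₗ counit2 K A counit := by
  apply TensorProduct.ext'; intro a b
  have pure1 : ∀ u v : A ⊗[K] A,
      vd ((map vd (vd ∘ₗ map S S ∘ₗ (TensorProduct.comm K A A).toLinearMap))
        ((tensorTensorTensorComm K A A A A) (u ⊗ₜ[K] v)))
      = vd ((map LinearMap.id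
            (vd ∘ₗ map LinearMap.id S ∘ₗ (TensorProduct.comm K A A).toLinearMap))
          ((TensorProduct.assoc K A A A)
            (u ⊗ₜ[K] (vd ((map LinearMap.id S) v))))) := by
    intro u v
    induction u using TensorProduct.induction_on with
    | zero => simp
    | add x y hx hy => simp only [add_tmul, tmul_add, map_add, hx, hy]
    | tmul x1 x2 =>
      induction v using TensorProduct.induction_on with
      | zero => simp
      | add x y hx hy => simp only [add_tmul, tmul_add, map_add, hx, hy]
      | tmul y1 y2 =>
        simp only [tensorTensorTensorComm_tmul, map_tmul, LinearMap.comp_apply,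
          LinearEquiv.coe_coe, comm_tmul, assoc_tmul, LinearMap.id_coe, id_eq]
        rw [hA.vd_assoc, hA.vd_assoc]
  simp only [LinearMap.comp_apply, comul2_tmul hA, pure1, hA.right_antipode_vd,
    LinearMap.toSpanSingleton_apply, counit2_tmul hA]
  have pure2 : ∀ u : A ⊗[K] A,
      vd ((map LinearMap.id
            (vd ∘ₗ map LinearMap.id S ∘ₗ (TensorProduct.comm K A A).toLinearMap))
          ((TensorProduct.assoc K A A A) (u ⊗ₜ[K] one)))
      = vd ((map LinearMap.id S) u) := by
    intro u
    induction u using TensorProduct.induction_on with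
    | zero => simp
    | add x y hx hy => simp only [add_tmul, tmul_add, map_add, hx, hy]
    | tmul x1 x2 => simp [hA.one_vd]
  rw [tmul_smul, map_smul, map_smul, map_smul, pure2, hA.right_antipode_vd, smul_smul, mul_comm]

/-- `S (x ⊢ y) = S y ⊣ S x`. -/
lemma S_vd (x y : A) : S (vd (x ⊗ₜ[K] y)) = dv (S y ⊗ₜ[K] S x) := by
  have hF2 : dv ∘ₗ map (S ∘ₗ vd) vd ∘ₗ comul2 K A comul
      = LinearMap.toSpanSingleton K A one ∘ₗ counit2 K A counit := by
    apply LinearMap.ext; intro w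
    have h1 : (map (S ∘ₗ vd) vd) (comul2 K A comul w)
        = (map S LinearMap.id) ((map vd vd) (comul2 K A comul w)) := by
      rw [map_map_apply]; simp
    simp only [LinearMap.comp_apply, h1, ← comul_vd_el hA, hA.left_antipode_dv,
      LinearMap.toSpanSingleton_apply, counit_vd_el hA]
  have h := pair_lemma (comul2 K A comul) (counit2 K A counit) (co2 hA) (cl2 hA) (cr2 hA)
    vd dv one (dd1 hA) hA.dv_one vd (S ∘ₗ vd)
    (vd ∘ₗ map S S ∘ₗ (TensorProduct.comm K A A).toLinearMap) hF2 (hGvd hA) (x ⊗ₜ[K] y)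
  simp only [LinearMap.comp_apply, LinearEquiv.coe_coe, comm_tmul, map_tmul] at h
  rw [h, dd1 hA, S_eL hA]

/-- `S (x ⊣ y) = S y ⊣ S x`. -/
lemma S_dv (x y : A) : S (dv (x ⊗ₜ[K] y)) = dv (S y ⊗ₜ[K] S x) := by
  have hF2 : dv ∘ₗ map (S ∘ₗ dv) dv ∘ₗ comul2 K A comul
      = LinearMap.toSpanSingleton K A one ∘ₗ counit2 K A counit := by
    apply LinearMap.ext; intro w
    have h1 : (map (S ∘ₗ dv) dv) (comul2 K A comul w)
        = (map S LinearMap.id) ((map dv dv) (comul2 K A comul w)) := by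
      rw [map_map_apply]; simp
    simp only [LinearMap.comp_apply, h1, ← comul_dv_el hA, hA.left_antipode_dv,
      LinearMap.toSpanSingleton_apply, counit_dv_el hA]
  have hG2 : vd ∘ₗ map dv (vd ∘ₗ map S S ∘ₗ (TensorProduct.comm K A A).toLinearMap)
      ∘ₗ comul2 K A comul = LinearMap.toSpanSingleton K A one ∘ₗ counit2 K A counit := by
    have same : vd ∘ₗ map dv (vd ∘ₗ map S S ∘ₗ (TensorProduct.comm K A A).toLinearMap)
        = vd ∘ₗ map vd (vd ∘ₗ map S S ∘ₗ (TensorProduct.comm K A A).toLinearMap) := by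
      apply TensorProduct.ext'; intro u h
      induction u using TensorProduct.induction_on with
      | zero => simp
      | add x y hx hy => simp only [add_tmul, map_add, hx, hy]
      | tmul x1 x2 => simp only [LinearMap.comp_apply, map_tmul]; rw [← hA.di_ax1]
    calc vd ∘ₗ map dv (vd ∘ₗ map S S ∘ₗ (TensorProduct.comm K A A).toLinearMap)
          ∘ₗ comul2 K A comul
        = (vd ∘ₗ map dv (vd ∘ₗ map S S ∘ₗ (TensorProduct.comm K A A).toLinearMap))
          ∘ₗ comul2 K A comul := by rw [LinearMap.comp_assoc]
      _ = (vd ∘ₗ map vd (vd ∘ₗ map S S ∘ₗ (TensorProduct.comm K A A).toLinearMap))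
          ∘ₗ comul2 K A comul := by rw [same]
      _ = LinearMap.toSpanSingleton K A one ∘ₗ counit2 K A counit := by
          rw [← LinearMap.comp_assoc]; exact hGvd hA
  have h := pair_lemma (comul2 K A comul) (counit2 K A counit) (co2 hA) (cl2 hA) (cr2 hA)
    vd dv one (dd1 hA) hA.dv_one dv (S ∘ₗ dv)
    (vd ∘ₗ map S S ∘ₗ (TensorProduct.comm K A A).toLinearMap) hF2 hG2 (x ⊗ₜ[K] y)
  simp only [LinearMap.comp_apply, LinearEquiv.coe_coe, comm_tmul, map_tmul] at h
  rw [h, dd1 hA, S_eL hA]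

end HopfAux
end Hopf3

section Hopf4
set_option linter.unusedSectionVars false
variable {K : Type*} [CommRing K] {A : Type*} [AddCommGroup A] [Module K A]
variable {comul : A →ₗ[K] A ⊗[K] A} {counit : A →ₗ[K] K} {one : A}
variable {vd dv : A ⊗[K] A →ₗ[K] A} {S : A →ₗ[K] A}

namespace HopfAux

variable (hA : IsHopfDialgebra K A comul counit one vd dv S)

omit hA in
lemma comul2_apply (x : A ⊗[K] A) :
    comul2 K A comul x = (tensorTensorTensorComm K A A A A) ((map comul comul) x) := rfl

include hA

lemma comm_comul : (TensorProduct.comm K A A).toLinearMap ∘ₗ comul = comul := by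
  apply LinearMap.ext; intro a; simpa using hA.cocomm a

lemma coassoc_symm_el (a : A) :
    (TensorProduct.assoc K A A A).symm ((map LinearMap.id comul) (comul a))
      = (map comul LinearMap.id) (comul a) := by
  rw [← coassoc_el hA, LinearEquiv.symm_apply_apply]

lemma V3 (a : A) : (map comul comul) (comul a)
    = (TensorProduct.assoc K A A (A ⊗[K] A)).symm
        ((map LinearMap.id ((map LinearMap.id comul) ∘ₗ comul)) (comul a)) := by
  have h1 : (map LinearMap.id ((map LinearMap.id comul) ∘ₗ comul)) (comul a)
      = (map LinearMap.id (map LinearMap.id comul)) ((map LinearMap.id comul) (comul a)) := by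
    rw [map_map_apply, LinearMap.id_comp]
  rw [h1, ← map_map_assoc_symm, coassoc_symm_el hA, map_map_apply]
  simp [TensorProduct.map_id]

/-- Key cocommutativity fact: `ttt ((Δ ⊗ Δ) (Δ a)) = (Δ ⊗ Δ) (Δ a)`. -/
lemma K3 (a : A) :
    comul2 K A comul (comul a) = (map comul comul) (comul a) := by
  have claim2 : ∀ w : A ⊗[K] (A ⊗[K] (A ⊗[K] A)),
      (tensorTensorTensorComm K A A A A) ((TensorProduct.assoc K A A (A ⊗[K] A)).symm w)
      = (TensorProduct.assoc K A A (A ⊗[K] A)).symm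
          ((map LinearMap.id
            ((TensorProduct.assoc K A A A).toLinearMap ∘ₗ
              (map (TensorProduct.comm K A A).toLinearMap LinearMap.id) ∘ₗ
              (TensorProduct.assoc K A A A).symm.toLinearMap)) w) := by
    have : (tensorTensorTensorComm K A A A A).toLinearMap ∘ₗ
        (TensorProduct.assoc K A A (A ⊗[K] A)).symm.toLinearMap
        = (TensorProduct.assoc K A A (A ⊗[K] A)).symm.toLinearMap ∘ₗ
          (map LinearMap.id
            ((TensorProduct.assoc K A A A).toLinearMap ∘ₗ
              (map (TensorProduct.comm K A A).toLinearMap LinearMap.id) ∘ₗ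
              (TensorProduct.assoc K A A A).symm.toLinearMap)) := by
      ext x y z w; simp
    exact fun w => LinearMap.congr_fun this w
  have claim3 :
      ((TensorProduct.assoc K A A A).toLinearMap ∘ₗ
        (map (TensorProduct.comm K A A).toLinearMap LinearMap.id) ∘ₗ
        (TensorProduct.assoc K A A A).symm.toLinearMap) ∘ₗ
        ((map LinearMap.id comul) ∘ₗ comul)
      = (map LinearMap.id comul) ∘ₗ comul := by
    apply LinearMap.ext; intro x
    simp only [LinearMap.comp_apply, LinearEquiv.coe_coe]
    rw [coassoc_symm_el hA]
    have : (map (TensorProduct.comm K A A).toLinearMap LinearMap.id)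
        ((map comul LinearMap.id) (comul x))
        = (map comul LinearMap.id) (comul x) := by
      rw [map_map_apply]
      have h2 : (TensorProduct.comm K A A).toLinearMap ∘ₗ comul = comul := comm_comul hA
      rw [h2]; simp
    rw [this, coassoc_el hA]
  calc comul2 K A comul (comul a)
      = (tensorTensorTensorComm K A A A A) ((map comul comul) (comul a)) := rfl
    _ = (tensorTensorTensorComm K A A A A) ((TensorProduct.assoc K A A (A ⊗[K] A)).symm
          ((map LinearMap.id ((map LinearMap.id comul) ∘ₗ comul)) (comul a))) := by
          rw [← V3 hA]
    _ = (TensorProduct.assoc K A A (A ⊗[K] A)).symm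
          ((map LinearMap.id
            ((TensorProduct.assoc K A A A).toLinearMap ∘ₗ
              (map (TensorProduct.comm K A A).toLinearMap LinearMap.id) ∘ₗ
              (TensorProduct.assoc K A A A).symm.toLinearMap))
            ((map LinearMap.id ((map LinearMap.id comul) ∘ₗ comul)) (comul a))) := claim2 _
    _ = (TensorProduct.assoc K A A (A ⊗[K] A)).symm
          ((map LinearMap.id ((map LinearMap.id comul) ∘ₗ comul)) (comul a)) := by
          rw [map_map_apply, claim3, LinearMap.id_comp]
    _ = (map comul comul) (comul a) := by rw [← V3 hA]

end HopfAux
end Hopf4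

section Hopf5
set_option linter.unusedSectionVars false
variable {K : Type*} [CommRing K] {A : Type*} [AddCommGroup A] [Module K A]
variable {comul : A →ₗ[K] A ⊗[K] A} {counit : A →ₗ[K] K} {one : A}
variable {vd dv : A ⊗[K] A →ₗ[K] A} {S : A →ₗ[K] A}

namespace HopfAux

variable (hA : IsHopfDialgebra K A comul counit one vd dv S)
include hA

lemma Sr_map : vd ∘ₗ map LinearMap.id S ∘ₗ comul
    = LinearMap.toSpanSingleton K A one ∘ₗ counit := by
  apply LinearMap.ext; intro a
  simpa [LinearMap.toSpanSingleton_apply] using hA.right_antipode_vd a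

lemma Sl_map : dv ∘ₗ map S LinearMap.id ∘ₗ comul
    = LinearMap.toSpanSingleton K A one ∘ₗ counit := by
  apply LinearMap.ext; intro a
  simpa [LinearMap.toSpanSingleton_apply] using hA.left_antipode_dv a

/-- `Δ ∘ S = (S ⊗ S) ∘ Δ`. -/
lemma comul_S (a : A) : comul (S a) = (map S S) (comul a) := by
  set vdM : (A ⊗[K] A) ⊗[K] (A ⊗[K] A) →ₗ[K] A ⊗[K] A :=
    map vd vd ∘ₗ (tensorTensorTensorComm K A A A A).toLinearMap with hvdM
  set dvM : (A ⊗[K] A) ⊗[K] (A ⊗[K] A) →ₗ[K] A ⊗[K] A :=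
    map dv dv ∘ₗ (tensorTensorTensorComm K A A A A).toLinearMap with hdvM
  have hd1M : ∀ x y z : A ⊗[K] A,
      dvM (x ⊗ₜ[K] vdM (y ⊗ₜ[K] z)) = dvM (dvM (x ⊗ₜ[K] y) ⊗ₜ[K] z) := by
    intro x y z
    induction x using TensorProduct.induction_on with
    | zero => simp
    | add u v hu hv => simp only [add_tmul, map_add, hu, hv]
    | tmul x1 x2 =>
      induction y using TensorProduct.induction_on with
      | zero => simp
      | add u v hu hv => simp only [add_tmul, tmul_add, map_add, hu, hv]
      | tmul y1 y2 =>
        induction z using TensorProduct.induction_on with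
        | zero => simp
        | add u v hu hv => simp only [add_tmul, tmul_add, map_add, hu, hv]
        | tmul z1 z2 =>
          simp only [hvdM, hdvM, LinearMap.comp_apply, LinearEquiv.coe_coe,
            tensorTensorTensorComm_tmul, map_tmul]
          rw [dd1 hA, dd1 hA]
  have honeM : ∀ m : A ⊗[K] A, dvM (m ⊗ₜ[K] (one ⊗ₜ[K] one)) = m := by
    intro m
    induction m using TensorProduct.induction_on with
    | zero => simp
    | add u v hu hv => simp only [add_tmul, map_add, hu, hv]
    | tmul x1 x2 =>
      simp only [hdvM, LinearMap.comp_apply, LinearEquiv.coe_coe,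
        tensorTensorTensorComm_tmul, map_tmul, hA.dv_one]
  have hF3 : dvM ∘ₗ map (comul ∘ₗ S) comul ∘ₗ comul
      = LinearMap.toSpanSingleton K (A ⊗[K] A) (one ⊗ₜ[K] one) ∘ₗ counit := by
    apply LinearMap.ext; intro x
    have h1 : (map (comul ∘ₗ S) comul) (comul x)
        = (map comul comul) ((map S LinearMap.id) (comul x)) := by
      rw [map_map_apply, LinearMap.comp_id]
    simp only [LinearMap.comp_apply, h1, hdvM, LinearEquiv.coe_coe]
    have h2 : (tensorTensorTensorComm K A A A A)
        ((map comul comul) ((map S LinearMap.id) (comul x)))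
        = comul2 K A comul ((map S LinearMap.id) (comul x)) := rfl
    rw [h2, ← comul_dv_el hA, hA.left_antipode_dv]
    simp [hA.isC3.comul_one, LinearMap.toSpanSingleton_apply]
  have hG3 : vdM ∘ₗ map comul (map S S ∘ₗ comul) ∘ₗ comul
      = LinearMap.toSpanSingleton K (A ⊗[K] A) (one ⊗ₜ[K] one) ∘ₗ counit := by
    apply LinearMap.ext; intro x
    have h1 : (map comul (map S S ∘ₗ comul)) (comul x)
        = (map LinearMap.id (map S S)) ((map comul comul) (comul x)) := by
      rw [map_map_apply, LinearMap.id_comp]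
    have h2 : (tensorTensorTensorComm K A A A A)
        ((map LinearMap.id (map S S)) ((map comul comul) (comul x)))
        = (map (map LinearMap.id S) (map LinearMap.id S))
            ((tensorTensorTensorComm K A A A A) ((map comul comul) (comul x))) := by
      rw [show (map LinearMap.id (map S S) :
            (A ⊗[K] A) ⊗[K] (A ⊗[K] A) →ₗ[K] (A ⊗[K] A) ⊗[K] (A ⊗[K] A))
          = map (map LinearMap.id LinearMap.id) (map S S) by rw [TensorProduct.map_id]]
      exact ttt_nat _ _ _ _ _
    have h3 : (tensorTensorTensorComm K A A A A) ((map comul comul) (comul x))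
        = (map comul comul) (comul x) := by
      rw [← comul2_apply, K3 hA]
    simp only [LinearMap.comp_apply, h1, hvdM, LinearEquiv.coe_coe, h2, h3]
    have h4 : (map vd vd) ((map (map LinearMap.id S) (map LinearMap.id S))
          ((map comul comul) (comul x)))
        = (map (vd ∘ₗ map LinearMap.id S ∘ₗ comul) (vd ∘ₗ map LinearMap.id S ∘ₗ comul))
            (comul x) := by
      rw [map_map_apply, map_map_apply]; simp only [LinearMap.comp_assoc]
    rw [h4, Sr_map hA]
    have h5 : ∀ v : A ⊗[K] A,
        (map (LinearMap.toSpanSingleton K A one ∘ₗ counit)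
          (LinearMap.toSpanSingleton K A one ∘ₗ counit)) v
        = counit2 K A counit v • (one ⊗ₜ[K] one) := by
      intro v
      induction v using TensorProduct.induction_on with
      | zero => simp
      | add u v hu hv => simp only [map_add, hu, hv, add_smul]
      | tmul x1 x2 =>
        simp [LinearMap.toSpanSingleton_apply, counit2_tmul hA, smul_tmul', tmul_smul,
          smul_smul, mul_comm]
    rw [h5, counit2_comul hA]
    simp [LinearMap.toSpanSingleton_apply]
  have h := pair_lemma comul counit hA.isC3.coassoc hA.isC3.counit_comul hA.isC3.comul_counit
    vdM dvM (one ⊗ₜ[K] one) hd1M honeM comul (comul ∘ₗ S) (map S S ∘ₗ comul) hF3 hG3 a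
  simp only [LinearMap.comp_apply] at h
  rw [h]
  have pureF : ∀ v : A ⊗[K] A, dvM ((one ⊗ₜ[K] one) ⊗ₜ[K] ((map S S) v)) = (map S S) v := by
    intro v
    induction v using TensorProduct.induction_on with
    | zero => simp
    | add u v hu hv => simp only [map_add, tmul_add, hu, hv]
    | tmul x y =>
      simp only [hdvM, LinearMap.comp_apply, LinearEquiv.coe_coe, map_tmul,
        tensorTensorTensorComm_tmul, S_eL hA]
  exact pureF (comul a)

end HopfAux
end Hopf5

section RrawDefs
variable (K : Type*) [CommRing K] (A : Type*) [AddCommGroup A] [Module K A]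

/-- The shuffle `(x ⊗ y) ⊗ b ↦ (x ⊗ b) ⊗ y`. -/
noncomputable def Qshuf : (A ⊗[K] A) ⊗[K] A →ₗ[K] (A ⊗[K] A) ⊗[K] A :=
  (TensorProduct.assoc K A A A).symm.toLinearMap ∘ₗ
    map LinearMap.id (TensorProduct.comm K A A).toLinearMap ∘ₗ
    (TensorProduct.assoc K A A A).toLinearMap

/-- The raw rack product `(x ⊗ y) ⊗ b ↦ (x ⊢ b) ⊣ S y`. -/
noncomputable def Rraw (vd dv : A ⊗[K] A →ₗ[K] A) (S : A →ₗ[K] A) :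
    (A ⊗[K] A) ⊗[K] A →ₗ[K] A :=
  dv ∘ₗ map vd S ∘ₗ Qshuf K A

variable {K A}

@[simp] lemma Qshuf_tmul (x y b : A) :
    Qshuf K A ((x ⊗ₜ[K] y) ⊗ₜ[K] b) = (x ⊗ₜ[K] b) ⊗ₜ[K] y := by
  simp [Qshuf]

@[simp] lemma Rraw_tmul (vd dv : A ⊗[K] A →ₗ[K] A) (S : A →ₗ[K] A) (x y b : A) :
    Rraw K A vd dv S ((x ⊗ₜ[K] y) ⊗ₜ[K] b) = dv (vd (x ⊗ₜ[K] b) ⊗ₜ[K] S y) := by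
  simp [Rraw]

lemma R_eq (comul : A →ₗ[K] A ⊗[K] A) (vd dv : A ⊗[K] A →ₗ[K] A) (S : A →ₗ[K] A) :
    dialgebraRack K A comul vd dv S = Rraw K A vd dv S ∘ₗ map comul LinearMap.id := by
  simp only [dialgebraRack, Rraw, Qshuf, LinearMap.comp_assoc]

lemma R_tmul (comul : A →ₗ[K] A ⊗[K] A) (vd dv : A ⊗[K] A →ₗ[K] A) (S : A →ₗ[K] A)
    (a b : A) :
    dialgebraRack K A comul vd dv S (a ⊗ₜ[K] b) = Rraw K A vd dv S (comul a ⊗ₜ[K] b) := by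
  rw [R_eq]; simp

end RrawDefs

section Hopf6
set_option linter.unusedSectionVars false
variable {K : Type*} [CommRing K] {A : Type*} [AddCommGroup A] [Module K A]
variable {comul : A →ₗ[K] A ⊗[K] A} {counit : A →ₗ[K] K} {one : A}
variable {vd dv : A ⊗[K] A →ₗ[K] A} {S : A →ₗ[K] A}

namespace HopfAux

variable (hA : IsHopfDialgebra K A comul counit one vd dv S)
include hA

/-- (i), `⊢`-version: `a ▹ (b ▹ c) = (a ⊢ b) ▹ c`. -/
lemma rack_i_vd (a b c : A) :
    dialgebraRack K A comul vd dv S (a ⊗ₜ[K] dialgebraRack K A comul vd dv S (b ⊗ₜ[K] c))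
      = dialgebraRack K A comul vd dv S (vd (a ⊗ₜ[K] b) ⊗ₜ[K] c) := by
  rw [R_tmul, R_tmul, R_tmul, comul_vd_el hA, comul2_tmul hA]
  have aux : ∀ u v : A ⊗[K] A,
      Rraw K A vd dv S (u ⊗ₜ[K] Rraw K A vd dv S (v ⊗ₜ[K] c))
        = Rraw K A vd dv S
            ((map vd vd) ((tensorTensorTensorComm K A A A A) (u ⊗ₜ[K] v)) ⊗ₜ[K] c) := by
    intro u v
    induction u using TensorProduct.induction_on with
    | zero => simp
    | add s t hs ht => simp only [add_tmul, tmul_add, map_add, hs, ht]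
    | tmul x1 x2 =>
      induction v using TensorProduct.induction_on with
      | zero => simp
      | add s t hs ht => simp only [add_tmul, tmul_add, map_add, hs, ht]
      | tmul y1 y2 =>
        simp only [tensorTensorTensorComm_tmul, map_tmul, Rraw_tmul]
        rw [S_vd hA, ← hA.di_ax3, hA.dv_assoc, hA.vd_assoc]
  exact aux (comul a) (comul b)

/-- (i), `⊣`-version: `a ▹ (b ▹ c) = (a ⊣ b) ▹ c`. -/
lemma rack_i_dv (a b c : A) :
    dialgebraRack K A comul vd dv S (a ⊗ₜ[K] dialgebraRack K A comul vd dv S (b ⊗ₜ[K] c))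
      = dialgebraRack K A comul vd dv S (dv (a ⊗ₜ[K] b) ⊗ₜ[K] c) := by
  rw [R_tmul, R_tmul, R_tmul, comul_dv_el hA, comul2_tmul hA]
  have aux : ∀ u v : A ⊗[K] A,
      Rraw K A vd dv S (u ⊗ₜ[K] Rraw K A vd dv S (v ⊗ₜ[K] c))
        = Rraw K A vd dv S
            ((map dv dv) ((tensorTensorTensorComm K A A A A) (u ⊗ₜ[K] v)) ⊗ₜ[K] c) := by
    intro u v
    induction u using TensorProduct.induction_on with
    | zero => simp
    | add s t hs ht => simp only [add_tmul, tmul_add, map_add, hs, ht]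
    | tmul x1 x2 =>
      induction v using TensorProduct.induction_on with
      | zero => simp
      | add s t hs ht => simp only [add_tmul, tmul_add, map_add, hs, ht]
      | tmul y1 y2 =>
        simp only [tensorTensorTensorComm_tmul, map_tmul, Rraw_tmul]
        rw [S_dv hA, ← hA.di_ax1, ← hA.di_ax3, hA.dv_assoc, hA.vd_assoc]
  exact aux (comul a) (comul b)

/-- `1 ▹ a = a`. -/
lemma rack_one_mul (a : A) :
    dialgebraRack K A comul vd dv S (one ⊗ₜ[K] a) = a := by
  rw [R_tmul, hA.isC3.comul_one, Rraw_tmul, S_one hA, hA.one_vd, hA.dv_one]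

/-- `a ▹ 1 = ε a • 1`. -/
lemma rack_mul_one (a : A) :
    dialgebraRack K A comul vd dv S (a ⊗ₜ[K] one) = counit a • one := by
  rw [R_tmul]
  have pure : ∀ u : A ⊗[K] A,
      Rraw K A vd dv S (u ⊗ₜ[K] one) = vd ((map LinearMap.id S) u) := by
    intro u
    induction u using TensorProduct.induction_on with
    | zero => simp
    | add s t hs ht => simp only [add_tmul, map_add, hs, ht]
    | tmul x y =>
      simp only [Rraw_tmul, map_tmul, LinearMap.id_coe, id_eq]
      rw [hA.di_ax3, S_eL hA]
  rw [pure, hA.right_antipode_vd]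

/-- `ε (a ▹ b) = ε a * ε b`. -/
lemma rack_counit (a b : A) :
    counit (dialgebraRack K A comul vd dv S (a ⊗ₜ[K] b)) = counit a * counit b := by
  rw [R_tmul]
  have pure : ∀ u : A ⊗[K] A,
      counit (Rraw K A vd dv S (u ⊗ₜ[K] b)) = counit2 K A counit u * counit b := by
    intro u
    induction u using TensorProduct.induction_on with
    | zero => simp
    | add s t hs ht => simp only [add_tmul, map_add, hs, ht, add_mul]
    | tmul x y =>
      rw [Rraw_tmul, counit_dv_el hA, counit2_tmul hA, counit_vd_el hA, counit2_tmul hA,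
        counit_S hA, counit2_tmul hA]
      ring
  rw [pure, counit2_comul hA]

end HopfAux
end Hopf6

section Hopf7
set_option linter.unusedSectionVars false
variable {K : Type*} [CommRing K] {A : Type*} [AddCommGroup A] [Module K A]
variable {comul : A →ₗ[K] A ⊗[K] A} {counit : A →ₗ[K] K} {one : A}
variable {vd dv : A ⊗[K] A →ₗ[K] A} {S : A →ₗ[K] A}

namespace HopfAux

variable (hA : IsHopfDialgebra K A comul counit one vd dv S)
include hA

lemma comul_S_map : comul ∘ₗ S = map S S ∘ₗ comul := by
  apply LinearMap.ext; intro a; simpa using comul_S hA a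

omit hA in
lemma Qshuf_mk (b : A) : ∀ t : A ⊗[K] A,
    Qshuf K A (t ⊗ₜ[K] b) = (map ((TensorProduct.mk K A A).flip b) LinearMap.id) t := by
  intro t
  induction t using TensorProduct.induction_on with
  | zero => simp
  | add s t hs ht => simp only [add_tmul, map_add, hs, ht]
  | tmul x y => simp

/-- (ii): `Δ (a ▹ b) = Σ (a1 ▹ b1) ⊗ (a2 ▹ b2)`. -/
lemma rack_comul (a b : A) :
    comul (dialgebraRack K A comul vd dv S (a ⊗ₜ[K] b))
      = (map (dialgebraRack K A comul vd dv S) (dialgebraRack K A comul vd dv S))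
          (comul2 K A comul (a ⊗ₜ[K] b)) := by
  have hPL_A : ∀ t : (A ⊗[K] A) ⊗[K] A,
      comul (dv ((map vd S) t))
        = (map dv dv) ((tensorTensorTensorComm K A A A A)
            ((map (comul ∘ₗ vd) (comul ∘ₗ S)) t)) := by
    intro t
    rw [comul_dv_el hA, comul2_apply, map_map_apply]
  -- left-hand side reduction
  have hL1 : comul (dialgebraRack K A comul vd dv S (a ⊗ₜ[K] b))
      = comul (dv ((map vd S) (Qshuf K A (comul a ⊗ₜ[K] b)))) := by
    rw [R_tmul]; simp [Rraw]
  have hL2 : (map (comul ∘ₗ vd) (comul ∘ₗ S)) (Qshuf K A (comul a ⊗ₜ[K] b))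
      = (map (map vd vd) (map S S))
          ((map (comul2 K A comul) comul) (Qshuf K A (comul a ⊗ₜ[K] b))) := by
    rw [map_map_apply, hA.comul_vd, comul_S_map hA]
  have hL3 : (tensorTensorTensorComm K A A A A)
        ((map (map vd vd) (map S S))
          ((map (comul2 K A comul) comul) (Qshuf K A (comul a ⊗ₜ[K] b))))
      = (map (map vd S) (map vd S))
          ((tensorTensorTensorComm K (A ⊗[K] A) (A ⊗[K] A) A A)
            ((map (comul2 K A comul) comul) (Qshuf K A (comul a ⊗ₜ[K] b)))) :=
    ttt_nat _ _ _ _ _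
  have hY : (map (comul2 K A comul) comul) (Qshuf K A (comul a ⊗ₜ[K] b))
      = (map ((tensorTensorTensorComm K A A A A).toLinearMap ∘ₗ
            (TensorProduct.mk K (A ⊗[K] A) (A ⊗[K] A)).flip (comul b)) LinearMap.id)
          ((map comul comul) (comul a)) := by
    rw [Qshuf_mk, map_map_apply]
    have hMKF : comul2 K A comul ∘ₗ (TensorProduct.mk K A A).flip b
        = (tensorTensorTensorComm K A A A A).toLinearMap ∘ₗ
            (TensorProduct.mk K (A ⊗[K] A) (A ⊗[K] A)).flip (comul b) ∘ₗ comul := by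
      apply LinearMap.ext; intro x
      simp [comul2_apply, LinearMap.flip_apply, TensorProduct.mk_apply]
    rw [hMKF, map_map_apply, LinearMap.id_comp, LinearMap.comp_id]
    simp only [LinearMap.comp_assoc]
  -- right-hand side reduction
  have hR1 : (map (dialgebraRack K A comul vd dv S) (dialgebraRack K A comul vd dv S))
        (comul2 K A comul (a ⊗ₜ[K] b))
      = (map (Rraw K A vd dv S) (Rraw K A vd dv S))
          ((map (map comul LinearMap.id) (map comul LinearMap.id))
            ((tensorTensorTensorComm K A A A A) (comul a ⊗ₜ[K] comul b))) := by
    rw [comul2_tmul hA, R_eq, map_map_apply]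
  have hR2 : (map (map comul LinearMap.id) (map comul LinearMap.id))
        ((tensorTensorTensorComm K A A A A) (comul a ⊗ₜ[K] comul b))
      = (tensorTensorTensorComm K (A ⊗[K] A) (A ⊗[K] A) A A)
          (((map comul comul) (comul a)) ⊗ₜ[K] comul b) := by
    rw [← ttt_nat comul comul LinearMap.id LinearMap.id]
    simp [TensorProduct.map_id]
  -- the pure shuffle identity
  have hPOmega : ∀ (w : (A ⊗[K] A) ⊗[K] (A ⊗[K] A)) (v : A ⊗[K] A),
      (map (dv ∘ₗ map vd S) (dv ∘ₗ map vd S))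
        ((tensorTensorTensorComm K (A ⊗[K] A) (A ⊗[K] A) A A)
          ((map ((tensorTensorTensorComm K A A A A).toLinearMap ∘ₗ
              (TensorProduct.mk K (A ⊗[K] A) (A ⊗[K] A)).flip v) LinearMap.id) w))
      = (map (Rraw K A vd dv S) (Rraw K A vd dv S))
          ((tensorTensorTensorComm K (A ⊗[K] A) (A ⊗[K] A) A A)
            (((tensorTensorTensorComm K A A A A) w) ⊗ₜ[K] v)) := by
    intro w v
    induction w using TensorProduct.induction_on with
    | zero => simp
    | add s t hs ht => simp only [add_tmul, map_add, hs, ht]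
    | tmul w1 w2 =>
      induction w1 using TensorProduct.induction_on with
      | zero => simp
      | add s t hs ht => simp only [add_tmul, tmul_add, map_add, hs, ht]
      | tmul x y =>
        induction w2 using TensorProduct.induction_on with
        | zero => simp
        | add s t hs ht => simp only [add_tmul, tmul_add, map_add, hs, ht]
        | tmul z t =>
          induction v using TensorProduct.induction_on with
          | zero =>
            rw [show (TensorProduct.mk K (A ⊗[K] A) (A ⊗[K] A)).flip (0 : A ⊗[K] A) = 0
              from map_zero _]
            simp
          | add s t' hs ht' =>
            rw [show (TensorProduct.mk K (A ⊗[K] A) (A ⊗[K] A)).flip (s + t')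
                = (TensorProduct.mk K (A ⊗[K] A) (A ⊗[K] A)).flip s
                  + (TensorProduct.mk K (A ⊗[K] A) (A ⊗[K] A)).flip t' from map_add _ _ _,
              LinearMap.comp_add, TensorProduct.map_add_left, LinearMap.add_apply, map_add,
              tmul_add, map_add, hs, ht']
            simp only [map_add]
          | tmul b1 b2 =>
            simp [LinearMap.flip_apply, TensorProduct.mk_apply]
  -- the cocommutativity input
  have hW : (tensorTensorTensorComm K A A A A) ((map comul comul) (comul a))
      = (map comul comul) (comul a) := by
    rw [← comul2_apply, K3 hA]
  calc comul (dialgebraRack K A comul vd dv S (a ⊗ₜ[K] b))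
      = (map dv dv) ((tensorTensorTensorComm K A A A A)
          ((map (comul ∘ₗ vd) (comul ∘ₗ S)) (Qshuf K A (comul a ⊗ₜ[K] b)))) := by
        rw [hL1, hPL_A]
    _ = (map (dv ∘ₗ map vd S) (dv ∘ₗ map vd S))
          ((tensorTensorTensorComm K (A ⊗[K] A) (A ⊗[K] A) A A)
            ((map ((tensorTensorTensorComm K A A A A).toLinearMap ∘ₗ
                (TensorProduct.mk K (A ⊗[K] A) (A ⊗[K] A)).flip (comul b)) LinearMap.id)
              ((map comul comul) (comul a)))) := by
        rw [hL2, hL3, map_map_apply, hY]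
    _ = (map (Rraw K A vd dv S) (Rraw K A vd dv S))
          ((tensorTensorTensorComm K (A ⊗[K] A) (A ⊗[K] A) A A)
            (((map comul comul) (comul a)) ⊗ₜ[K] comul b)) := by
        rw [hPOmega, hW]
    _ = (map (dialgebraRack K A comul vd dv S) (dialgebraRack K A comul vd dv S))
          (comul2 K A comul (a ⊗ₜ[K] b)) := by
        rw [hR1, hR2]

end HopfAux
end Hopf7

section Hopf8
set_option linter.unusedSectionVars false
variable {K : Type*} [CommRing K] {A : Type*} [AddCommGroup A] [Module K A]
variable {comul : A →ₗ[K] A ⊗[K] A} {counit : A →ₗ[K] K} {one : A}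
variable {vd dv : A ⊗[K] A →ₗ[K] A} {S : A →ₗ[K] A}

namespace HopfAux

variable (hA : IsHopfDialgebra K A comul counit one vd dv S)
include hA

lemma W_E2 (a : A) : (map comul comul) (comul a)
    = (TensorProduct.assoc K A A (A ⊗[K] A)).symm
        ((map LinearMap.id (TensorProduct.assoc K A A A).toLinearMap)
          ((map LinearMap.id (map comul LinearMap.id))
            ((map LinearMap.id comul) (comul a)))) := by
  have h1 : (map LinearMap.id (TensorProduct.assoc K A A A).toLinearMap)
        ((map LinearMap.id (map comul LinearMap.id)) ((map LinearMap.id comul) (comul a)))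
      = (map LinearMap.id ((TensorProduct.assoc K A A A).toLinearMap ∘ₗ
          (map comul LinearMap.id) ∘ₗ comul)) (comul a) := by
    rw [map_map_apply, map_map_apply, LinearMap.id_comp, LinearMap.id_comp,
      LinearMap.comp_assoc]
  rw [h1, hA.isC3.coassoc, ← V3 hA]

lemma E2_counit (a : A) :
    (map LinearMap.id ((TensorProduct.lid K A).toLinearMap ∘ₗ map counit LinearMap.id))
        ((map LinearMap.id comul) (comul a)) = comul a := by
  rw [map_map_apply, LinearMap.id_comp, LinearMap.comp_assoc, hA.isC3.counit_comul]
  simp [TensorProduct.map_id]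

lemma hR1_iii (a b c : A) (m : A ⊗[K] A →ₗ[K] A) :
    m ((map (dialgebraRack K A comul vd dv S) (dialgebraRack K A comul vd dv S))
        ((tensorTensorTensorComm K A A A A) (comul a ⊗ₜ[K] (b ⊗ₜ[K] c))))
      = m ((map (Rraw K A vd dv S) (Rraw K A vd dv S))
          ((tensorTensorTensorComm K (A ⊗[K] A) (A ⊗[K] A) A A)
            (((map comul comul) (comul a)) ⊗ₜ[K] (b ⊗ₜ[K] c)))) := by
  rw [R_eq, ← map_map_apply (Rraw K A vd dv S) (Rraw K A vd dv S)
    (map comul LinearMap.id) (map comul LinearMap.id),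
    ← ttt_nat comul comul LinearMap.id LinearMap.id]
  simp [TensorProduct.map_id]

/-- (iii), `⊢`-version, elementwise. -/
lemma rack_iii_vd (a b c : A) :
    dialgebraRack K A comul vd dv S (a ⊗ₜ[K] vd (b ⊗ₜ[K] c))
      = vd ((map (dialgebraRack K A comul vd dv S) (dialgebraRack K A comul vd dv S))
          ((tensorTensorTensorComm K A A A A) (comul a ⊗ₜ[K] (b ⊗ₜ[K] c)))) := by
  have pinner : ∀ (p r : A) (u : A ⊗[K] A),
      vd ((map (Rraw K A vd dv S) (Rraw K A vd dv S))
        ((tensorTensorTensorComm K (A ⊗[K] A) (A ⊗[K] A) A A)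
          (((TensorProduct.assoc K A A (A ⊗[K] A)).symm
              (p ⊗ₜ[K] ((TensorProduct.assoc K A A A) (u ⊗ₜ[K] r)))) ⊗ₜ[K] (b ⊗ₜ[K] c))))
      = vd (vd (p ⊗ₜ[K] b) ⊗ₜ[K]
          dv (vd (dv ((map S LinearMap.id) u) ⊗ₜ[K] c) ⊗ₜ[K] S r)) := by
    intro p r u
    induction u using TensorProduct.induction_on with
    | zero => simp
    | add s t hs ht => simp only [map_add, add_tmul, tmul_add, hs, ht]
    | tmul u1 u2 =>
      simp only [assoc_tmul, assoc_symm_tmul, tensorTensorTensorComm_tmul, map_tmul,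
        Rraw_tmul, LinearMap.id_coe, id_eq, LinearEquiv.coe_coe]
      calc vd (dv (vd (p ⊗ₜ[K] b) ⊗ₜ[K] S u1) ⊗ₜ[K] dv (vd (u2 ⊗ₜ[K] c) ⊗ₜ[K] S r))
          = vd (vd (vd (p ⊗ₜ[K] b) ⊗ₜ[K] S u1) ⊗ₜ[K] dv (vd (u2 ⊗ₜ[K] c) ⊗ₜ[K] S r)) :=
            (hA.di_ax1 _ _ _).symm
        _ = vd (vd (p ⊗ₜ[K] b) ⊗ₜ[K]
              vd (S u1 ⊗ₜ[K] dv (vd (u2 ⊗ₜ[K] c) ⊗ₜ[K] S r))) := hA.vd_assoc _ _ _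
        _ = vd (vd (p ⊗ₜ[K] b) ⊗ₜ[K]
              dv (vd (S u1 ⊗ₜ[K] vd (u2 ⊗ₜ[K] c)) ⊗ₜ[K] S r)) := by
            rw [hA.di_ax3 (S u1) (vd (u2 ⊗ₜ[K] c)) (S r)]
        _ = vd (vd (p ⊗ₜ[K] b) ⊗ₜ[K]
              dv (vd (vd (S u1 ⊗ₜ[K] u2) ⊗ₜ[K] c) ⊗ₜ[K] S r)) := by
            rw [hA.vd_assoc (S u1) u2 c]
        _ = vd (vd (p ⊗ₜ[K] b) ⊗ₜ[K]
              dv (vd (dv (S u1 ⊗ₜ[K] u2) ⊗ₜ[K] c) ⊗ₜ[K] S r)) := by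
            rw [hA.di_ax1 (S u1) u2 c]
  have aux3 : ∀ s : A ⊗[K] (A ⊗[K] A),
      vd ((map (Rraw K A vd dv S) (Rraw K A vd dv S))
        ((tensorTensorTensorComm K (A ⊗[K] A) (A ⊗[K] A) A A)
          (((TensorProduct.assoc K A A (A ⊗[K] A)).symm
              ((map LinearMap.id (TensorProduct.assoc K A A A).toLinearMap)
                ((map LinearMap.id (map comul LinearMap.id)) s))) ⊗ₜ[K] (b ⊗ₜ[K] c))))
      = Rraw K A vd dv S
          (((map LinearMap.id ((TensorProduct.lid K A).toLinearMap ∘ₗ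
              map counit LinearMap.id)) s) ⊗ₜ[K] vd (b ⊗ₜ[K] c)) := by
    intro s
    induction s using TensorProduct.induction_on with
    | zero => simp
    | add s t hs ht => simp only [map_add, add_tmul, hs, ht]
    | tmul p w =>
      induction w using TensorProduct.induction_on with
      | zero => simp
      | add s t hs ht => simp only [map_add, tmul_add, add_tmul, hs, ht]
      | tmul q r =>
        simp only [map_tmul, LinearMap.id_coe, id_eq, LinearMap.comp_apply,
          LinearEquiv.coe_coe, lid_tmul]
        rw [pinner p r (comul q), hA.left_antipode_dv]
        simp only [← smul_tmul', tmul_smul, map_smul, Rraw_tmul]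
        rw [hA.one_vd, ← hA.vd_assoc p b c, hA.di_ax3 (vd (p ⊗ₜ[K] b)) c (S r)]
  rw [R_tmul, hR1_iii hA a b c vd, W_E2 hA a, aux3 ((map LinearMap.id comul) (comul a)),
    E2_counit hA]

/-- (iii), `⊣`-version, elementwise. -/
lemma rack_iii_dv (a b c : A) :
    dialgebraRack K A comul vd dv S (a ⊗ₜ[K] dv (b ⊗ₜ[K] c))
      = dv ((map (dialgebraRack K A comul vd dv S) (dialgebraRack K A comul vd dv S))
          ((tensorTensorTensorComm K A A A A) (comul a ⊗ₜ[K] (b ⊗ₜ[K] c)))) := by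
  have pinner : ∀ (p r : A) (u : A ⊗[K] A),
      dv ((map (Rraw K A vd dv S) (Rraw K A vd dv S))
        ((tensorTensorTensorComm K (A ⊗[K] A) (A ⊗[K] A) A A)
          (((TensorProduct.assoc K A A (A ⊗[K] A)).symm
              (p ⊗ₜ[K] ((TensorProduct.assoc K A A A) (u ⊗ₜ[K] r)))) ⊗ₜ[K] (b ⊗ₜ[K] c))))
      = dv (vd (p ⊗ₜ[K] b) ⊗ₜ[K]
          dv (dv (dv ((map S LinearMap.id) u) ⊗ₜ[K] c) ⊗ₜ[K] S r)) := by
    intro p r u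
    induction u using TensorProduct.induction_on with
    | zero => simp
    | add s t hs ht => simp only [map_add, add_tmul, tmul_add, hs, ht]
    | tmul u1 u2 =>
      simp only [assoc_tmul, assoc_symm_tmul, tensorTensorTensorComm_tmul, map_tmul,
        Rraw_tmul, LinearMap.id_coe, id_eq, LinearEquiv.coe_coe]
      calc dv (dv (vd (p ⊗ₜ[K] b) ⊗ₜ[K] S u1) ⊗ₜ[K] dv (vd (u2 ⊗ₜ[K] c) ⊗ₜ[K] S r))
          = dv (vd (p ⊗ₜ[K] b) ⊗ₜ[K]
              dv (S u1 ⊗ₜ[K] dv (vd (u2 ⊗ₜ[K] c) ⊗ₜ[K] S r))) := hA.dv_assoc _ _ _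
        _ = dv (vd (p ⊗ₜ[K] b) ⊗ₜ[K]
              dv (dv (S u1 ⊗ₜ[K] vd (u2 ⊗ₜ[K] c)) ⊗ₜ[K] S r)) := by
            rw [hA.dv_assoc (S u1) (vd (u2 ⊗ₜ[K] c)) (S r)]
        _ = dv (vd (p ⊗ₜ[K] b) ⊗ₜ[K]
              dv (dv (S u1 ⊗ₜ[K] dv (u2 ⊗ₜ[K] c)) ⊗ₜ[K] S r)) := by
            rw [hA.di_ax2 (S u1) u2 c]
        _ = dv (vd (p ⊗ₜ[K] b) ⊗ₜ[K]
              dv (dv (dv (S u1 ⊗ₜ[K] u2) ⊗ₜ[K] c) ⊗ₜ[K] S r)) := by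
            rw [hA.dv_assoc (S u1) u2 c]
  have aux3 : ∀ s : A ⊗[K] (A ⊗[K] A),
      dv ((map (Rraw K A vd dv S) (Rraw K A vd dv S))
        ((tensorTensorTensorComm K (A ⊗[K] A) (A ⊗[K] A) A A)
          (((TensorProduct.assoc K A A (A ⊗[K] A)).symm
              ((map LinearMap.id (TensorProduct.assoc K A A A).toLinearMap)
                ((map LinearMap.id (map comul LinearMap.id)) s))) ⊗ₜ[K] (b ⊗ₜ[K] c))))
      = Rraw K A vd dv S
          (((map LinearMap.id ((TensorProduct.lid K A).toLinearMap ∘ₗ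
              map counit LinearMap.id)) s) ⊗ₜ[K] dv (b ⊗ₜ[K] c)) := by
    intro s
    induction s using TensorProduct.induction_on with
    | zero => simp
    | add s t hs ht => simp only [map_add, add_tmul, hs, ht]
    | tmul p w =>
      induction w using TensorProduct.induction_on with
      | zero => simp
      | add s t hs ht => simp only [map_add, tmul_add, add_tmul, hs, ht]
      | tmul q r =>
        simp only [map_tmul, LinearMap.id_coe, id_eq, LinearMap.comp_apply,
          LinearEquiv.coe_coe, lid_tmul]
        rw [pinner p r (comul q), hA.left_antipode_dv]
        simp only [← smul_tmul', tmul_smul, map_smul, Rraw_tmul]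
        rw [hA.dv_assoc one c (S r),
          hA.di_ax2 (vd (p ⊗ₜ[K] b)) one (dv (c ⊗ₜ[K] S r)), hA.one_vd,
          ← hA.di_ax3 p b c, hA.dv_assoc (vd (p ⊗ₜ[K] b)) c (S r)]
  rw [R_tmul, hR1_iii hA a b c dv, W_E2 hA a, aux3 ((map LinearMap.id comul) (comul a)),
    E2_counit hA]

end HopfAux
end Hopf8

section Hopf9
set_option linter.unusedSectionVars false
variable {K : Type*} [CommRing K] {A : Type*} [AddCommGroup A] [Module K A]
variable {comul : A →ₗ[K] A ⊗[K] A} {counit : A →ₗ[K] K} {one : A}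
variable {vd dv : A ⊗[K] A →ₗ[K] A} {S : A →ₗ[K] A}

namespace HopfAux

variable (hA : IsHopfDialgebra K A comul counit one vd dv S)
include hA

lemma PV (w : A ⊗[K] A) (x : A) : vd (vd w ⊗ₜ[K] x) = vd (dv w ⊗ₜ[K] x) := by
  induction w using TensorProduct.induction_on with
  | zero => simp
  | add s t hs ht => simp only [map_add, add_tmul, hs, ht]
  | tmul u v => exact hA.di_ax1 u v x

lemma PD2 (x : A) (w : A ⊗[K] A) : dv (x ⊗ₜ[K] dv w) = dv (x ⊗ₜ[K] vd w) := by
  induction w using TensorProduct.induction_on with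
  | zero => simp
  | add s t hs ht => simp only [map_add, tmul_add, hs, ht]
  | tmul u v => exact hA.di_ax2 x u v

lemma S_vd_el2 (w : A ⊗[K] A) :
    S (vd w) = dv ((map S S) ((TensorProduct.comm K A A) w)) := by
  induction w using TensorProduct.induction_on with
  | zero => simp
  | add s t hs ht => simp only [map_add, hs, ht]
  | tmul x y => simp only [comm_tmul, map_tmul]; exact S_vd hA x y

/-- Key lemma M : `Σ (S(a1) ⊢ a2) ▹ x = ε(a) x`. -/
lemma lemma_M (a x : A) :
    dialgebraRack K A comul vd dv S (vd ((map S LinearMap.id) (comul a)) ⊗ₜ[K] x)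
      = counit a • x := by
  rw [R_tmul, comul_vd_el hA, comul2_apply]
  have h1 : (map comul comul) ((map S LinearMap.id) (comul a))
      = (map (map S S) LinearMap.id) ((map comul comul) (comul a)) := by
    rw [map_map_apply, map_map_apply, comul_S_map hA, LinearMap.comp_id, LinearMap.id_comp]
  rw [h1]
  have h2 : (tensorTensorTensorComm K A A A A)
        ((map (map S S) LinearMap.id) ((map comul comul) (comul a)))
      = (map (map S LinearMap.id) (map S LinearMap.id))
          ((map comul comul) (comul a)) := by
    rw [show (map (map S S) LinearMap.id :
          (A ⊗[K] A) ⊗[K] (A ⊗[K] A) →ₗ[K] (A ⊗[K] A) ⊗[K] (A ⊗[K] A))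
        = map (map S S) (map LinearMap.id LinearMap.id) by rw [TensorProduct.map_id],
      ttt_nat, ← comul2_apply, K3 hA]
  rw [h2]
  have h3 : (map vd vd) ((map (map S LinearMap.id) (map S LinearMap.id))
        ((map comul comul) (comul a)))
      = (map ((vd ∘ₗ map S LinearMap.id) ∘ₗ comul) ((vd ∘ₗ map S LinearMap.id) ∘ₗ comul))
          (comul a) := by
    rw [map_map_apply, map_map_apply]
  rw [h3]
  have aux : ∀ t : A ⊗[K] A,
      Rraw K A vd dv S ((map ((vd ∘ₗ map S LinearMap.id) ∘ₗ comul)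
          ((vd ∘ₗ map S LinearMap.id) ∘ₗ comul)) t ⊗ₜ[K] x)
        = counit2 K A counit t • x := by
    intro t
    induction t using TensorProduct.induction_on with
    | zero => simp
    | add s t hs ht => simp only [map_add, add_tmul, hs, ht, map_add, add_smul]
    | tmul p q =>
      simp only [map_tmul, LinearMap.comp_apply, Rraw_tmul]
      rw [PV hA, hA.left_antipode_dv p]
      rw [S_vd_el2 hA]
      have hc : (TensorProduct.comm K A A) ((map S LinearMap.id) (comul q))
          = (map LinearMap.id S) (comul q) := by
        rw [show (TensorProduct.comm K A A) ((map S LinearMap.id) (comul q))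
            = (map LinearMap.id S) ((TensorProduct.comm K A A) (comul q)) from
            (map_comm LinearMap.id S (comul q)).symm, hA.cocomm q]
      rw [hc]
      have h7 : (map S S) ((map LinearMap.id S) (comul q))
          = (map LinearMap.id S) ((map S S) (comul q)) := by
        rw [map_map_apply, map_map_apply, LinearMap.comp_id, LinearMap.id_comp]
      rw [h7, ← comul_S hA q, PD2 hA, hA.right_antipode_vd (S q), counit_S hA q]
      simp only [← smul_tmul', tmul_smul, map_smul, hA.one_vd, hA.dv_one,
        counit2_tmul hA, smul_smul]
      rw [mul_comm]
  rw [aux (comul a), counit2_comul hA]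

end HopfAux
end Hopf9

section Hopf10
set_option linter.unusedSectionVars false
variable {K : Type*} [CommRing K] {A : Type*} [AddCommGroup A] [Module K A]
variable {comul : A →ₗ[K] A ⊗[K] A} {counit : A →ₗ[K] K} {one : A}
variable {vd dv : A ⊗[K] A →ₗ[K] A} {S : A →ₗ[K] A}

namespace HopfAux

variable (hA : IsHopfDialgebra K A comul counit one vd dv S)
include hA

/-- self-distributivity, elementwise. -/
lemma rack_sd (a b c : A) :
    dialgebraRack K A comul vd dv S (a ⊗ₜ[K] dialgebraRack K A comul vd dv S (b ⊗ₜ[K] c))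
      = dialgebraRack K A comul vd dv S
          ((map (dialgebraRack K A comul vd dv S) (dialgebraRack K A comul vd dv S))
            ((tensorTensorTensorComm K A A A A) (comul a ⊗ₜ[K] (b ⊗ₜ[K] c)))) := by
  set gb : A →ₗ[K] A := vd ∘ₗ (TensorProduct.mk K A A).flip b with hgb
  set m2 : A ⊗[K] A →ₗ[K] A :=
    dialgebraRack K A comul vd dv S ∘ₗ (TensorProduct.mk K A A).flip c ∘ₗ
      vd ∘ₗ map S LinearMap.id with hm2
  have auxsd2 : ∀ (q : A) (u : A ⊗[K] A),
      dialgebraRack K A comul vd dv S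
          (vd (Rraw K A vd dv S (u ⊗ₜ[K] b) ⊗ₜ[K] q) ⊗ₜ[K] c)
        = dialgebraRack K A comul vd dv S
            ((map gb m2) ((TensorProduct.assoc K A A A) (u ⊗ₜ[K] q))) := by
    intro q u
    induction u using TensorProduct.induction_on with
    | zero => simp
    | add s t hs ht => simp only [map_add, add_tmul, hs, ht]
    | tmul x y =>
      simp only [Rraw_tmul, assoc_tmul, map_tmul, hgb, hm2, LinearMap.comp_apply,
        LinearMap.flip_apply, TensorProduct.mk_apply, LinearMap.id_coe, id_eq]
      rw [← PV hA, hA.vd_assoc, ← rack_i_vd hA]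
  have auxsd1 : ∀ t : A ⊗[K] A,
      dialgebraRack K A comul vd dv S
          ((map (dialgebraRack K A comul vd dv S) (dialgebraRack K A comul vd dv S))
            ((tensorTensorTensorComm K A A A A) (t ⊗ₜ[K] (b ⊗ₜ[K] c))))
        = dialgebraRack K A comul vd dv S ((map gb m2)
            ((TensorProduct.assoc K A A A) ((map comul LinearMap.id) t))) := by
    intro t
    induction t using TensorProduct.induction_on with
    | zero => simp
    | add s t hs ht => simp only [map_add, add_tmul, hs, ht]
    | tmul p q =>
      simp only [tensorTensorTensorComm_tmul, map_tmul, LinearMap.id_coe, id_eq]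
      rw [rack_i_vd hA, R_tmul comul vd dv S p b, auxsd2 q (comul p)]
  have m2comul : m2 ∘ₗ comul = LinearMap.toSpanSingleton K A c ∘ₗ counit := by
    apply LinearMap.ext; intro a'
    simp only [hm2, LinearMap.comp_apply, LinearMap.flip_apply, TensorProduct.mk_apply,
      LinearMap.toSpanSingleton_apply]
    exact lemma_M hA a' c
  have pf : ∀ v : A ⊗[K] A,
      dialgebraRack K A comul vd dv S
          ((map gb (LinearMap.toSpanSingleton K A c ∘ₗ counit)) v)
        = dialgebraRack K A comul vd dv S
            (vd ((TensorProduct.rid K A) ((map LinearMap.id counit) v) ⊗ₜ[K] b) ⊗ₜ[K] c) := by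
    intro v
    induction v using TensorProduct.induction_on with
    | zero => simp
    | add s t hs ht => simp only [map_add, add_tmul, hs, ht]
    | tmul x y =>
      simp only [map_tmul, LinearMap.comp_apply, LinearMap.toSpanSingleton_apply,
        LinearMap.id_coe, id_eq, LinearEquiv.coe_coe, rid_tmul, hgb,
        LinearMap.flip_apply, TensorProduct.mk_apply]
      simp only [tmul_smul, ← smul_tmul', map_smul]
  rw [auxsd1 (comul a), coassoc_el hA, map_map_apply, LinearMap.comp_id, m2comul,
    pf (comul a), counit_right hA, ← rack_i_vd hA]

end HopfAux
end Hopf10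
/-- Let `(A, Δ, ε, 1, ⊢, ⊣, S)` be a cocommutative Hopf dialgebra over `K`
and define `a ▹ b := Σ (a⁽¹⁾ ⊢ b) ⊣ S(a⁽²⁾)`.  Then for all `a, b, c ∈ A`:
(i) `a ▹ (b ▹ c) = (a ⊢ b) ▹ c = (a ⊣ b) ▹ c`;
(ii) `Δ(a ▹ b) = Σ (a⁽¹⁾ ▹ b⁽¹⁾) ⊗ (a⁽²⁾ ▹ b⁽²⁾)`;
(iii) `a ▹ (b ⊢ c) = Σ (a⁽¹⁾ ▹ b) ⊢ (a⁽²⁾ ▹ c)` and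
`a ▹ (b ⊣ c) = Σ (a⁽¹⁾ ▹ b) ⊣ (a⁽²⁾ ▹ c)`;
(iv) `(A, Δ, ε, 1, ▹)` is a cocommutative rack bialgebra. -/
theorem hopf_dialgebra_rack_bialgebra
    (K : Type*) [CommRing K] [Algebra ℚ K]
    (A : Type*) [AddCommGroup A] [Module K A]
    (comul : A →ₗ[K] A ⊗[K] A) (counit : A →ₗ[K] K) (one : A)
    (vd dv : A ⊗[K] A →ₗ[K] A) (S : A →ₗ[K] A)
    (hA : IsHopfDialgebra K A comul counit one vd dv S) :
    (∀ a b c : A,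
      dialgebraRack K A comul vd dv S (a ⊗ₜ[K] dialgebraRack K A comul vd dv S (b ⊗ₜ[K] c))
        = dialgebraRack K A comul vd dv S (vd (a ⊗ₜ[K] b) ⊗ₜ[K] c) ∧
      dialgebraRack K A comul vd dv S (a ⊗ₜ[K] dialgebraRack K A comul vd dv S (b ⊗ₜ[K] c))
        = dialgebraRack K A comul vd dv S (dv (a ⊗ₜ[K] b) ⊗ₜ[K] c)) ∧
    (comul ∘ₗ dialgebraRack K A comul vd dv S
      = TensorProduct.map (dialgebraRack K A comul vd dv S) (dialgebraRack K A comul vd dv S)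
          ∘ₗ comul2 K A comul) ∧
    (dialgebraRack K A comul vd dv S ∘ₗ TensorProduct.map LinearMap.id vd
      = vd ∘ₗ TensorProduct.map (dialgebraRack K A comul vd dv S)
            (dialgebraRack K A comul vd dv S) ∘ₗ
          (tensorTensorTensorComm K A A A A).toLinearMap ∘ₗ
          TensorProduct.map comul LinearMap.id) ∧
    (dialgebraRack K A comul vd dv S ∘ₗ TensorProduct.map LinearMap.id dv
      = dv ∘ₗ TensorProduct.map (dialgebraRack K A comul vd dv S)
            (dialgebraRack K A comul vd dv S) ∘ₗ
          (tensorTensorTensorComm K A A A A).toLinearMap ∘ₗ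
          TensorProduct.map comul LinearMap.id) ∧
    IsRackBialgebra K A comul counit one (dialgebraRack K A comul vd dv S) := by
  have hcm : comul ∘ₗ dialgebraRack K A comul vd dv S
      = TensorProduct.map (dialgebraRack K A comul vd dv S) (dialgebraRack K A comul vd dv S)
          ∘ₗ comul2 K A comul := by
    apply TensorProduct.ext'
    intro a b
    simp only [LinearMap.comp_apply]
    exact HopfAux.rack_comul hA a b
  refine ⟨fun a b c => ⟨HopfAux.rack_i_vd hA a b c, HopfAux.rack_i_dv hA a b c⟩,
    hcm, ?_, ?_, ?_⟩
  · apply TensorProduct.ext'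
    intro a w
    simp only [LinearMap.comp_apply, map_tmul, LinearMap.id_coe, id_eq, LinearEquiv.coe_coe]
    induction w using TensorProduct.induction_on with
    | zero => simp
    | tmul b c => exact HopfAux.rack_iii_vd hA a b c
    | add s t hs ht => simp only [tmul_add, map_add, hs, ht]
  · apply TensorProduct.ext'
    intro a w
    simp only [LinearMap.comp_apply, map_tmul, LinearMap.id_coe, id_eq, LinearEquiv.coe_coe]
    induction w using TensorProduct.induction_on with
    | zero => simp
    | tmul b c => exact HopfAux.rack_iii_dv hA a b c
    | add s t hs ht => simp only [tmul_add, map_add, hs, ht]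
  · refine ⟨hA.isC3, hcm, ?_, HopfAux.rack_one_mul hA, HopfAux.rack_mul_one hA, ?_⟩
    · apply TensorProduct.ext'
      intro a b
      simp only [LinearMap.comp_apply]
      rw [HopfAux.rack_counit hA a b]
      exact (HopfAux.counit2_tmul hA a b).symm
    · apply TensorProduct.ext'
      intro a w
      simp only [LinearMap.comp_apply, map_tmul, LinearMap.id_coe, id_eq, LinearEquiv.coe_coe]
      induction w using TensorProduct.induction_on with
      | zero => simp
      | tmul b c => exact HopfAux.rack_sd hA a b c
      | add s t hs ht => simp only [tmul_add, map_add, hs, ht]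

end RackPaper
end

section
/- Let (A,Δ,ε,1,⊢,⊣,S) be a cocommutative Hopf dialgebra over K. If x,y ∈ A are primitive, then x⊢y − y⊣x is primitive. Consequently Prim(A), equipped with [x,y] := x⊢y − y⊣x, is a (left) Leibniz algebra over K. -/
open TensorProduct

namespace RackPaper

variable (K : Type*) [CommRing K]
variable (B : Type*) [AddCommGroup B] [Module K B]

/-- Let `(A, Δ, ε, 1, ⊢, ⊣, S)` be a cocommutative Hopf dialgebra over `K`.
If `x, y ∈ A` are primitive, then `x ⊢ y - y ⊣ x` is primitive.  Consequently `Prim(A)`,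
equipped with `[x,y] := x ⊢ y - y ⊣ x`, is a (left) Leibniz algebra over `K`. -/
theorem hopf_dialgebra_primitives_leibniz
    (K : Type*) [CommRing K] [Algebra ℚ K]
    (A : Type*) [AddCommGroup A] [Module K A]
    (comul : A →ₗ[K] A ⊗[K] A) (counit : A →ₗ[K] K) (one : A)
    (vd dv : A ⊗[K] A →ₗ[K] A) (S : A →ₗ[K] A)
    (hA : IsHopfDialgebra K A comul counit one vd dv S)
    (br : A → A → A) (hbr : ∀ x y : A, br x y = vd (x ⊗ₜ[K] y) - dv (y ⊗ₜ[K] x)) :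
    (∀ x y : A, IsPrimitive K A comul one x → IsPrimitive K A comul one y →
      IsPrimitive K A comul one (br x y)) ∧
    (∀ x y z : A, IsPrimitive K A comul one x → IsPrimitive K A comul one y →
      IsPrimitive K A comul one z →
      br x (br y z) = br (br x y) z + br y (br x z)) := by
  constructor
  · intro x y hx hy
    have hvd := LinearMap.congr_fun hA.comul_vd (x ⊗ₜ[K] y)
    have hdv := LinearMap.congr_fun hA.comul_dv (y ⊗ₜ[K] x)
    simp only [comul2, LinearMap.comp_apply, LinearEquiv.coe_coe,
      TensorProduct.map_tmul] at hvd hdv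
    rw [hx, hy] at hvd hdv
    simp only [TensorProduct.add_tmul, TensorProduct.tmul_add, map_add,
      TensorProduct.tensorTensorTensorComm_tmul, TensorProduct.map_tmul,
      hA.one_vd, hA.dv_one, hA.balanced] at hvd hdv
    unfold IsPrimitive
    rw [hbr, map_sub, hvd, hdv, TensorProduct.sub_tmul, TensorProduct.tmul_sub]
    abel
  · intro x y z _ _ _
    simp only [hbr, TensorProduct.tmul_sub, TensorProduct.sub_tmul, map_sub]
    simp only [hA.vd_assoc, ← hA.di_ax1, ← hA.di_ax2, ← hA.dv_assoc, hA.di_ax3]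
    abel

end RackPaper
end
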